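/- arXiv:1612.04790 — 4 statements merged into one kernel-verified Lean document; each statement's English description precedes it below -/
import Mathlib

section
/- Let D be an open ear-decomposition of a 2-vertex-connected graph G with exactly φ(G) even ears. Let P be a 2-ear of D with internal vertex z, and suppose at least one nontrivial ear of D other than P has an endpoint at z; let Q be the first such nontrivial ear in the order of D. Then Q has an odd number of edges. -/
open SimpleGraph

variable {V : Type*}

/-- An *ear* of a graph `G`: a walk of length at least `1` whose two endpoints may
coincide, but all of whose other vertices are distinct (from each other and from the
endpoints); i.e. the walk is an (open) path, or a cycle when the endpoints coincide. -/
structure Ear (G : SimpleGraph V) where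
  a : V
  b : V
  walk : G.Walk a b
  length_pos : 1 ≤ walk.length
  ear : (a ≠ b ∧ walk.IsPath) ∨ (∃ h : a = b, (walk.copy rfl h.symm).IsCycle)

namespace Ear

variable {G : SimpleGraph V}

/-- The set of vertices of an ear. -/
def vertices (P : Ear G) : Set V := {v | v ∈ P.walk.support}

/-- The (set of) endpoints of an ear. -/
def endpoints (P : Ear G) : Set V := {P.a, P.b}

/-- The set `in(P)` of internal vertices of an ear. -/
def internal (P : Ear G) : Set V := P.vertices \ P.endpoints

/-- The internal vertices of an ear, as a `Finset`. -/
def internalFinset [DecidableEq V] (P : Ear G) : Finset V :=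
  P.walk.support.toFinset \ {P.a, P.b}

/-- The list of edges of an ear. -/
def edges (P : Ear G) : List (Sym2 V) := P.walk.edges

/-- A *trivial* ear has a single edge. -/
def IsTrivial (P : Ear G) : Prop := P.walk.length = 1

/-- A *short* ear has `2` or `3` edges. -/
def IsShort (P : Ear G) : Prop := P.walk.length = 2 ∨ P.walk.length = 3

/-- A *long* ear has at least `4` edges. -/
def IsLong (P : Ear G) : Prop := 4 ≤ P.walk.length

/-- An *open* ear has distinct endpoints. -/
def IsOpen (P : Ear G) : Prop := P.a ≠ P.b

end Ear

/-- The trivial ear corresponding to a single edge `wy` of `G`. -/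
def trivialEar (G : SimpleGraph V) {w y : V} (h : G.Adj w y) : Ear G where
  a := w
  b := y
  walk := SimpleGraph.Walk.cons h SimpleGraph.Walk.nil
  length_pos := by simp
  ear := Or.inl ⟨h.ne, by simp [h.ne]⟩

/-- The set of vertices appearing in the root or in the first `i` ears (those with
index `< i`) of a putative ear-decomposition. -/
def priorVerts {G : SimpleGraph V} (root : V) (ears : List (Ear G)) (i : ℕ) : Set V :=
  insert root {v | ∃ j : Fin ears.length, (j : ℕ) < i ∧ v ∈ (ears.get j).vertices}

/-- An *ear-decomposition* of `G`: a root vertex `P₀` together with a sequence of ears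
`P₁, …, P_k` such that each ear shares exactly its endpoints with the set of vertices
appearing earlier, and every edge of `G` lies in exactly one ear. -/
structure EarDecomp (G : SimpleGraph V) where
  root : V
  ears : List (Ear G)
  endpoints_sub : ∀ i : Fin ears.length,
    (ears.get i).endpoints ⊆ priorVerts root ears (i : ℕ)
  internal_new : ∀ i : Fin ears.length,
    (ears.get i).internal ∩ priorVerts root ears (i : ℕ) = ∅
  edge_cover : ∀ e ∈ G.edgeSet, ∃! i : Fin ears.length, e ∈ (ears.get i).edges

namespace EarDecomp

variable {G : SimpleGraph V}

/-- An ear-decomposition is *open* if every ear except the first one is open. -/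
def IsOpen (D : EarDecomp G) : Prop :=
  ∀ i : Fin D.ears.length, 1 ≤ (i : ℕ) → (D.ears.get i).IsOpen

/-- The number of even ears of an ear-decomposition. -/
def evenEars (D : EarDecomp G) : ℕ :=
  D.ears.countP fun P => decide (Even P.walk.length)

/-- The ear with index `i` is *pendant*: it is nontrivial, and no other nontrivial ear
has an endpoint among its internal vertices. -/
def IsPendant (D : EarDecomp G) (i : Fin D.ears.length) : Prop :=
  ¬ (D.ears.get i).IsTrivial ∧
  ∀ j : Fin D.ears.length, j ≠ i → ¬ (D.ears.get j).IsTrivial →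
    (D.ears.get j).a ∉ (D.ears.get i).internal ∧ (D.ears.get j).b ∉ (D.ears.get i).internal

/-- A *nice* ear-decomposition: open, all short ears are pendant, and no edge of `G`
connects internal vertices of two different short ears. -/
def IsNice (D : EarDecomp G) : Prop :=
  D.IsOpen ∧
  (∀ i : Fin D.ears.length, (D.ears.get i).IsShort → D.IsPendant i) ∧
  (∀ i j : Fin D.ears.length, i ≠ j → (D.ears.get i).IsShort → (D.ears.get j).IsShort →
    ∀ u ∈ (D.ears.get i).internal, ∀ v ∈ (D.ears.get j).internal, ¬ G.Adj u v)

/-- The number `π` of pendant ears of an ear-decomposition. -/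
noncomputable def numPendant (D : EarDecomp G) : ℕ :=
  letI := Classical.decPred fun i : Fin D.ears.length => D.IsPendant i
  (Finset.univ.filter fun i : Fin D.ears.length => D.IsPendant i).card

/-- The set `E'` of edges lying in nontrivial ears of an ear-decomposition. -/
noncomputable def nontrivialEdges [DecidableEq V] (D : EarDecomp G) : Finset (Sym2 V) :=
  letI := Classical.decPred fun i : Fin D.ears.length => ¬ (D.ears.get i).IsTrivial
  (Finset.univ.filter fun i : Fin D.ears.length => ¬ (D.ears.get i).IsTrivial).biUnion
    fun i => (D.ears.get i).edges.toFinset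

/-- The eardrum `M` arising from the pendant short ears of an ear-decomposition: for each
pendant `2`-ear its internal vertex, and for each pendant `3`-ear the pair of its internal
vertices (joined by an edge). -/
noncomputable def eardrum [DecidableEq V] (D : EarDecomp G) : Finset (Finset V) :=
  letI := Classical.decPred fun i : Fin D.ears.length =>
    (D.ears.get i).IsShort ∧ D.IsPendant i
  ((Finset.univ.filter fun i : Fin D.ears.length =>
      (D.ears.get i).IsShort ∧ D.IsPendant i).image
    fun i => (D.ears.get i).internalFinset)

/-- The set `V_I` of internal vertices of the non-pendant ears (including the root). -/
noncomputable def VI [DecidableEq V] (D : EarDecomp G) : Finset V :=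
  letI := Classical.decPred fun i : Fin D.ears.length => D.IsPendant i
  insert D.root ((Finset.univ.filter fun i : Fin D.ears.length => ¬ D.IsPendant i).biUnion
    fun i => (D.ears.get i).internalFinset)

end EarDecomp

/-- `φ(G)`: the minimum number of even ears over all ear-decompositions of `G`. -/
noncomputable def phi (G : SimpleGraph V) : ℕ :=
  sInf {n | ∃ D : EarDecomp G, D.evenEars = n}

/-- A graph is 2-vertex-connected if it has at least `3` vertices and deleting any single
vertex leaves a connected graph. -/
def TwoVertexConnected {W : Type*} (G : SimpleGraph W) : Prop :=
  3 ≤ Nat.card W ∧ ∀ v : W, (G.induce ({v}ᶜ : Set W)).Connected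

/-- `OPT_2VC(G)`: the minimum number of edges of a 2-vertex-connected spanning subgraph. -/
noncomputable def OPT2VC {W : Type*} (G : SimpleGraph W) : ℕ :=
  sInf {n | ∃ H : SimpleGraph W, H ≤ G ∧ TwoVertexConnected H ∧ H.edgeSet.ncard = n}

/-- An *eardrum* in `G`: a set of pairwise vertex-disjoint subgraphs, each consisting of a
single vertex or a single edge (encoded by their vertex sets). -/
def IsEardrum [DecidableEq V] (G : SimpleGraph V) (M : Finset (Finset V)) : Prop :=
  (∀ f ∈ M, (∃ v, f = {v}) ∨ (∃ u v, G.Adj u v ∧ f = {u, v})) ∧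
  ∀ f ∈ M, ∀ g ∈ M, f ≠ g → Disjoint f g

/-- `V(M)`: the set of vertices of the members of an eardrum. -/
def eardrumVerts (M : Finset (Finset V)) : Set V := {v | ∃ f ∈ M, v ∈ f}

/-- An *earmuff* for the eardrum `M`: a collection of paths `P_f`, for `f` in a subset
`F ⊆ M` (here given as a duplicate-free list of pairs `(f, P_f)`), such that each `P_f` is
a path whose set of internal vertices is exactly the vertex set of `f` (containing the
edge of `f` when `f` is an edge), whose two distinct endpoints lie outside `V(M)`, and
such that the union of all the paths is a forest. -/
structure Earmuff (G : SimpleGraph V) (M : Finset (Finset V)) where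
  pairs : List (Finset V × Ear G)
  nodup_fst : (pairs.map Prod.fst).Nodup
  mem_M : ∀ pr ∈ pairs, pr.1 ∈ M
  is_path : ∀ pr ∈ pairs, pr.2.a ≠ pr.2.b ∧ pr.2.walk.IsPath
  internal_eq : ∀ pr ∈ pairs, pr.2.internal = ↑pr.1
  edge_mem : ∀ pr ∈ pairs, ∀ u v : V, u ∈ pr.1 → v ∈ pr.1 → u ≠ v → s(u, v) ∈ pr.2.edges
  ends_outside : ∀ pr ∈ pairs, pr.2.a ∉ eardrumVerts M ∧ pr.2.b ∉ eardrumVerts M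
  forest : (SimpleGraph.fromEdgeSet {e : Sym2 V | ∃ pr ∈ pairs, e ∈ pr.2.edges}).IsAcyclic

/-- `µ(G, M)`: the maximum size of an earmuff for `M` in `G`. -/
noncomputable def mu (G : SimpleGraph V) (M : Finset (Finset V)) : ℕ :=
  sSup {n | ∃ em : Earmuff G M, em.pairs.length = n}


/-!
If the first nontrivial ear `Q` at `z` were even, write the `2`-ear as `P = x z y` and
`Q = z ⋯ w`. Replace `P` and `Q` by the ear `P' = x z ⋯ w` (a cycle if `x = w`) and the
trivial ear `T = z y`, placed where `Q` was. This is again an ear-decomposition: `z` is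
introduced by `P'`, and the ears between `P` and `Q` that touch `z` are trivial by the
choice of `Q`, so they can be postponed until after `T`. Both `P'` (of length `|Q| + 1`)
and `T` are odd, so the number of even ears drops by two, contradicting the minimality
of `φ(G)`.
-/

namespace SimpleGraph.Walk

variable {G : SimpleGraph V}

lemma exists_eq_cons_cons_nil_of_length_eq_two {u v : V} (W : G.Walk u v)
    (h : W.length = 2) :
    ∃ (m : V) (hum : G.Adj u m) (hmv : G.Adj m v), W = cons hum (cons hmv nil) := by
  match W, h with
  | cons hum (cons hmv nil), _ => exact ⟨_, hum, hmv, rfl⟩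

end SimpleGraph.Walk

namespace List

lemma existsUnique_get_iff_countP_eq_one {α : Type*} (p : α → Prop) [DecidablePred p]
    (L : List α) : (∃! i : Fin L.length, p (L.get i)) ↔ L.countP p = 1 := by
  have hcount : L.countP p = (Finset.univ.filter fun i : Fin L.length => p (L.get i)).card := by
    conv_lhs => rw [← ofFn_get L, ofFn_eq_map]
    rw [countP_map, ← toFinset_finRange, (nodup_finRange _).card_eq_countP]
    rfl
  rw [hcount, Fintype.existsUnique_iff_card_one]

lemma exists_eq_append_cons_append_cons {α : Type*} (L : List α) {i j : Fin L.length}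
    (hij : i < j) :
    ∃ A B C, L = A ++ L.get i :: (B ++ L.get j :: C) ∧
      ∀ x ∈ B, ∃ k : Fin L.length, i < k ∧ k < j ∧ L.get k = x := by
  refine ⟨L.take i, (L.drop (i + 1)).take (j - (i + 1)), L.drop (j + 1), ?_, ?_⟩
  · have hB : L.drop (i + 1) = (L.drop (i + 1)).take (j - (i + 1)) ++ L.drop j := by
      conv_lhs => rw [← take_append_drop (j - (i + 1)) (L.drop (i + 1))]
      rw [drop_drop, Nat.add_sub_cancel' (by omega)]
    rw [get_eq_getElem, get_eq_getElem, getElem_cons_drop, ← hB, getElem_cons_drop,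
      take_append_drop]
  · intro x hx
    obtain ⟨k, hk, rfl⟩ := mem_iff_getElem.mp hx
    simp only [length_take, length_drop] at hk
    exact ⟨⟨i + 1 + k, by omega⟩, by simp [Fin.lt_def]; omega, by simp [Fin.lt_def]; omega,
      by simp⟩

end List

namespace Ear

variable {G : SimpleGraph V}

lemma a_mem_vertices (P : Ear G) : P.a ∈ P.vertices := P.walk.start_mem_support

lemma b_mem_vertices (P : Ear G) : P.b ∈ P.vertices := P.walk.end_mem_support

lemma endpoints_subset_vertices (P : Ear G) : P.endpoints ⊆ P.vertices := by
  rintro v (rfl | rfl)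
  exacts [P.a_mem_vertices, P.b_mem_vertices]

lemma IsTrivial.vertices_eq {P : Ear G} (hP : P.IsTrivial) : P.vertices = P.endpoints := by
  match P with
  | ⟨a, b, .cons h .nil, _, _⟩ => ext v; simp [vertices, endpoints]

lemma IsTrivial.internal_eq_empty {P : Ear G} (hP : P.IsTrivial) : P.internal = ∅ := by
  simp [internal, hP.vertices_eq]

lemma isPath_of_isOpen {P : Ear G} (hP : P.IsOpen) : P.walk.IsPath := by
  rcases P.ear with ⟨-, h⟩ | ⟨h, -⟩
  exacts [h, absurd h hP]

lemma isOpen_of_length_eq_two {P : Ear G} (hP : P.walk.length = 2) : P.IsOpen := by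
  rcases P.ear with ⟨h, -⟩ | ⟨h, hc⟩
  · exact h
  · have := hc.three_le_length
    simp only [Walk.length_copy] at this
    omega

lemma exists_eq_cons_cons_nil_of_mem_internal {P : Ear G} {z : V} (hP : P.walk.length = 2)
    (hz : z ∈ P.internal) :
    ∃ (hxz : G.Adj P.a z) (hzy : G.Adj z P.b), P.walk = .cons hxz (.cons hzy .nil) := by
  obtain ⟨m, hxm, hmy, hW⟩ := P.walk.exists_eq_cons_cons_nil_of_length_eq_two hP
  obtain rfl : z = m := by
    obtain ⟨hzv, hze⟩ := hz
    simp_all [vertices, endpoints]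
  exact ⟨hxm, hmy, hW⟩

lemma exists_isPath_from_endpoint {P : Ear G} {z : V} (hP : P.IsOpen)
    (hz : P.a = z ∨ P.b = z) :
    ∃ (w : V) (W : G.Walk z w), W.IsPath ∧ W.length = P.walk.length ∧
      (∀ e, e ∈ W.edges ↔ e ∈ P.edges) ∧ {v | v ∈ W.support} = P.vertices ∧
      w ≠ z ∧ P.endpoints = {z, w} := by
  rcases hz with rfl | rfl
  · exact ⟨P.b, P.walk, isPath_of_isOpen hP, rfl, fun _ => Iff.rfl, rfl, Ne.symm hP, rfl⟩
  · refine ⟨P.a, P.walk.reverse, (isPath_of_isOpen hP).reverse, P.walk.length_reverse,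
      fun e => by simp [edges], ?_, hP, Set.pair_comm _ _⟩
    ext v
    simp [vertices]

def consPath {x z w : V} (h : G.Adj x z) (W : G.Walk z w) (hW : W.IsPath)
    (hx : x ∈ W.support → x = w) (he : s(x, z) ∉ W.edges) : Ear G where
  a := x
  b := w
  walk := .cons h W
  length_pos := by simp
  ear := by
    by_cases hxw : x = w
    · subst hxw
      exact Or.inr ⟨rfl, (Walk.cons_isCycle_iff W h).mpr ⟨hW, he⟩⟩
    · exact Or.inl ⟨hxw, (Walk.cons_isPath_iff h W).mpr ⟨hW, fun h => hxw (hx h)⟩⟩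

lemma countP_mem_edges_pair_eq [DecidableEq V] {P Q P' T : Ear G} {x y z : V}
    (hP : P.edges = [s(x, z), s(z, y)]) (hxy : x ≠ y) (hxz : x ≠ z)
    (hP' : ∀ e, e ∈ P'.edges ↔ e = s(x, z) ∨ e ∈ Q.edges) (hT : T.edges = [s(z, y)])
    (hxzQ : s(x, z) ∉ Q.edges) (e : Sym2 V) :
    [P', T].countP (fun E => e ∈ E.edges) = [P, Q].countP (fun E => e ∈ E.edges) := by
  have hne : s(x, z) ≠ s(z, y) := by simp [hxz, hxy]
  simp only [List.countP_cons, List.countP_nil, hP, hP', hT, List.mem_cons, List.not_mem_nil,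
    or_false]
  split_ifs <;> grind

def listVertices (L : List (Ear G)) : Set V := {v | ∃ E ∈ L, v ∈ E.vertices}

@[simp] lemma listVertices_nil : listVertices ([] : List (Ear G)) = ∅ := by
  simp [listVertices]

@[simp] lemma listVertices_cons (E : Ear G) (L : List (Ear G)) :
    listVertices (E :: L) = E.vertices ∪ listVertices L := by
  ext v
  simp [listVertices]

def AttachesTo (E : Ear G) (s : Set V) : Prop := E.endpoints ⊆ s ∧ Disjoint E.internal s

/-- The ears of `L` can be added, in this order, to a partial ear-decomposition whose
vertex set is `s`. -/
def IsSequence : Set V → List (Ear G) → Prop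
  | _, [] => True
  | s, E :: L => E.AttachesTo s ∧ IsSequence (s ∪ E.vertices) L

@[simp] lemma isSequence_nil (s : Set V) : IsSequence s ([] : List (Ear G)) := trivial

@[simp] lemma isSequence_cons (s : Set V) (E : Ear G) (L : List (Ear G)) :
    IsSequence s (E :: L) ↔ E.AttachesTo s ∧ IsSequence (s ∪ E.vertices) L :=
  Iff.rfl

lemma isSequence_append {s : Set V} {L M : List (Ear G)} :
    IsSequence s (L ++ M) ↔ IsSequence s L ∧ IsSequence (s ∪ listVertices L) M := by
  induction L generalizing s with
  | nil => simp
  | cons E L ih => simp [ih, and_assoc, Set.union_assoc]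

lemma isSequence_iff_get {s : Set V} {L : List (Ear G)} :
    IsSequence s L ↔
      ∀ i : Fin L.length, (L.get i).AttachesTo (s ∪ listVertices (L.take i)) := by
  induction L generalizing s with
  | nil => simp
  | cons E L ih =>
    simp only [isSequence_cons, ih, List.length_cons, Fin.forall_fin_succ]
    simp [Set.union_assoc]

lemma IsSequence.endpoints_subset {s : Set V} {L : List (Ear G)} (hL : IsSequence s L) :
    ∀ F ∈ L, F.endpoints ⊆ s ∪ listVertices L := by
  induction L generalizing s with
  | nil => simp
  | cons E L ih =>
    rintro F (_ | ⟨_, hF⟩)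
    · exact hL.1.1.trans Set.subset_union_left
    · simpa [Set.union_assoc] using ih hL.2 F hF

lemma IsSequence.trivial_append {s : Set V} {L M : List (Ear G)}
    (hL : ∀ F ∈ L, F.IsTrivial ∧ F.endpoints ⊆ s) (hM : IsSequence s M) :
    IsSequence s (L ++ M) := by
  induction L with
  | nil => exact hM
  | cons F L ih =>
    obtain ⟨hF, hFs⟩ := hL F List.mem_cons_self
    refine ⟨⟨hFs, by simp [hF.internal_eq_empty]⟩, ?_⟩
    rw [hF.vertices_eq, Set.union_eq_self_of_subset_right hFs]
    exact ih fun F' hF' => hL F' (List.mem_cons_of_mem _ hF')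

lemma IsSequence.filter_avoiding [DecidableEq V] {z : V} {s : Set V} {L : List (Ear G)}
    (hL : IsSequence (insert z s) L) (hz : z ∉ s)
    (htriv : ∀ F ∈ L, (F.a = z ∨ F.b = z) → F.IsTrivial) :
    IsSequence s (L.filter fun F => F.a ≠ z ∧ F.b ≠ z) ∧
      z ∉ listVertices (L.filter fun F => F.a ≠ z ∧ F.b ≠ z) ∧
      insert z s ∪ listVertices L =
        insert z (s ∪ listVertices (L.filter fun F => F.a ≠ z ∧ F.b ≠ z)) := by
  induction L generalizing s with
  | nil => simp
  | cons F L ih =>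
    obtain ⟨⟨hFe, hFi⟩, hL⟩ := hL
    have htriv' := fun F' hF' => htriv F' (List.mem_cons_of_mem F hF')
    by_cases hFz : F.a ≠ z ∧ F.b ≠ z
    · rw [List.filter_cons_of_pos (by simpa using hFz)]
      have hzF : z ∉ F.vertices := by
        intro h
        by_cases he : z ∈ F.endpoints
        · rcases he with h' | h' <;> simp_all
        · exact hFi.notMem_of_mem_left ⟨h, he⟩ (Set.mem_insert z s)
      have hFs : F.endpoints ⊆ s := fun v hv => by
        rcases hFe hv with rfl | h
        · rcases hv with h' | h' <;> simp_all
        · exact h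
      rw [Set.insert_union] at hL
      obtain ⟨ih₁, ih₂, ih₃⟩ := ih hL (fun h => h.elim hz hzF) htriv'
      refine ⟨⟨⟨hFs, hFi.mono_right (Set.subset_insert z s)⟩, ih₁⟩, ?_, ?_⟩
      · rw [listVertices_cons]
        exact fun h => h.elim hzF ih₂
      · rw [listVertices_cons, listVertices_cons, ← Set.union_assoc, ← Set.union_assoc,
          Set.insert_union, ih₃]
    · rw [List.filter_cons_of_neg (by simpa using hFz)]
      have hFv : F.vertices ⊆ insert z s := by
        rw [(htriv F List.mem_cons_self (by tauto)).vertices_eq]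
        exact hFe
      rw [Set.union_eq_self_of_subset_right hFv] at hL
      obtain ⟨ih₁, ih₂, ih₃⟩ := ih hL hz htriv'
      refine ⟨ih₁, ih₂, ?_⟩
      rw [listVertices_cons, ← ih₃, ← Set.union_assoc, Set.union_eq_self_of_subset_right hFv]

lemma IsSequence.reattach [DecidableEq V] {s : Set V} {x y z w : V} {P Q P' T : Ear G}
    {B B₂ C : List (Ear G)} (h : IsSequence s (P :: (B ++ Q :: C)))
    (hP : P.vertices = {x, z, y}) (hPe : P.endpoints = {x, y}) (hzP : z ∈ P.internal)
    (hB : ∀ F ∈ B, (F.a = z ∨ F.b = z) → F.IsTrivial)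
    (hB₂ : ∀ F ∈ B₂, F ∈ B ∧ F.IsTrivial)
    (hQe : Q.endpoints = {z, w}) (hwz : w ≠ z)
    (hP' : P'.vertices = insert x Q.vertices) (hP'e : P'.endpoints = {x, w})
    (hT : T.IsTrivial) (hTe : T.endpoints = {z, y}) :
    IsSequence s ((B.filter fun F => F.a ≠ z ∧ F.b ≠ z) ++ P' :: T :: (B₂ ++ C)) := by
  obtain ⟨⟨hPs, hPi⟩, h⟩ := h
  have hxs : x ∈ s := hPs (by simp [hPe])
  have hys : y ∈ s := hPs (by simp [hPe])
  have hzs : z ∉ s := hPi.notMem_of_mem_left hzP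
  rw [(show s ∪ P.vertices = insert z s by ext; simp [hP]; grind), isSequence_append] at h
  obtain ⟨hBseq, ⟨hQs, hQi⟩, hC⟩ := h
  obtain ⟨hB₁, hzB₁, hBeq⟩ := hBseq.filter_avoiding hzs hB
  set s₂ := s ∪ listVertices (B.filter fun F => F.a ≠ z ∧ F.b ≠ z)
  rw [hBeq] at hQs hQi hC
  have hzQ : z ∈ Q.vertices := Q.endpoints_subset_vertices (by simp [hQe])
  have hP'i : P'.internal ⊆ insert z Q.internal := by
    rintro v ⟨hv, hve⟩
    simp only [hP', hP'e, Set.mem_insert_iff, Set.mem_singleton_iff, not_or] at hv hve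
    by_cases hvz : v = z
    · exact Or.inl hvz
    · exact Or.inr ⟨hv.resolve_left hve.1, by simp [hQe, hvz, hve.2]⟩
  have hP'att : P'.AttachesTo s₂ := by
    refine ⟨?_, ?_⟩
    · rw [hP'e]
      rintro v (rfl | rfl)
      · exact Or.inl hxs
      · exact (hQs (by simp [hQe])).resolve_left hwz
    · refine Set.disjoint_of_subset_left hP'i (Set.disjoint_insert_left.mpr ⟨?_, ?_⟩)
      · exact fun h => h.elim hzs hzB₁
      · exact hQi.mono_right (Set.subset_insert z s₂)
  have hs₃ : s₂ ∪ P'.vertices = insert z s₂ ∪ Q.vertices := by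
    ext v
    simp only [hP', Set.mem_union, Set.mem_insert_iff]
    grind
  have hTv : T.vertices ⊆ s₂ ∪ P'.vertices := by
    rw [hT.vertices_eq, hTe, hs₃]
    rintro v (rfl | rfl)
    exacts [Or.inr hzQ, Or.inl (Or.inr (Or.inl hys))]
  rw [isSequence_append]
  refine ⟨hB₁, hP'att, ⟨hTv.trans' (endpoints_subset_vertices T), by
    simp [hT.internal_eq_empty]⟩, ?_⟩
  rw [Set.union_eq_self_of_subset_right hTv, hs₃]
  refine IsSequence.trivial_append (fun F hF => ⟨(hB₂ F hF).2, ?_⟩) hC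
  calc F.endpoints ⊆ insert z s ∪ listVertices B := hBseq.endpoints_subset F (hB₂ F hF).1
    _ = insert z s₂ := hBeq
    _ ⊆ insert z s₂ ∪ Q.vertices := Set.subset_union_left

end Ear

lemma priorVerts_eq_insert_listVertices {G : SimpleGraph V} (root : V) (L : List (Ear G))
    (i : ℕ) : priorVerts root L i = insert root (Ear.listVertices (L.take i)) := by
  ext v
  simp only [priorVerts, Ear.listVertices, Set.mem_insert_iff, Set.mem_ofPred_eq,
    List.mem_take_iff_getElem]
  refine or_congr Iff.rfl ⟨fun ⟨j, hj, hv⟩ => ⟨L.get j, ⟨j, by grind, rfl⟩, hv⟩, ?_⟩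
  rintro ⟨_, ⟨j, hj, rfl⟩, hv⟩
  exact ⟨⟨j, by grind⟩, by grind, hv⟩

namespace EarDecomp

variable {G : SimpleGraph V}

lemma isSequence (D : EarDecomp G) : Ear.IsSequence {D.root} D.ears :=
  Ear.isSequence_iff_get.mpr fun i => by
    rw [← Set.insert_eq, ← priorVerts_eq_insert_listVertices, Ear.AttachesTo,
      Set.disjoint_iff_inter_eq_empty]
    exact ⟨D.endpoints_sub i, D.internal_new i⟩

lemma le_of_mem_internal_of_mem_vertices (D : EarDecomp G) {i j : Fin D.ears.length} {v : V}
    (hi : v ∈ (D.ears.get i).internal) (hj : v ∈ (D.ears.get j).vertices) : i ≤ j := by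
  by_contra! hji
  exact Set.eq_empty_iff_forall_notMem.mp (D.internal_new i) v
    ⟨hi, Set.mem_insert_of_mem _ ⟨j, hji, hj⟩⟩

lemma not_mem_edges_of_ne (D : EarDecomp G) {i j : Fin D.ears.length} (hij : i ≠ j)
    {e : Sym2 V} (hi : e ∈ (D.ears.get i).edges) : e ∉ (D.ears.get j).edges := fun hj =>
  hij ((D.edge_cover e ((D.ears.get i).walk.edges_subset_edgeSet hi)).unique hi hj)

variable [DecidableEq V]

lemma countP_mem_edges_eq_one (D : EarDecomp G) {e : Sym2 V} (he : e ∈ G.edgeSet) :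
    D.ears.countP (fun E => e ∈ E.edges) = 1 :=
  (List.existsUnique_get_iff_countP_eq_one _ _).mp (by simpa using D.edge_cover e he)

def ofIsSequence (root : V) (L : List (Ear G)) (hL : Ear.IsSequence {root} L)
    (hedges : ∀ e ∈ G.edgeSet, L.countP (fun E => e ∈ E.edges) = 1) : EarDecomp G where
  root := root
  ears := L
  endpoints_sub i := by
    rw [priorVerts_eq_insert_listVertices, Set.insert_eq]
    exact (Ear.isSequence_iff_get.mp hL i).1
  internal_new i := by
    rw [priorVerts_eq_insert_listVertices, Set.insert_eq, ← Set.disjoint_iff_inter_eq_empty]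
    exact (Ear.isSequence_iff_get.mp hL i).2
  edge_cover e he := by
    simpa using (List.existsUnique_get_iff_countP_eq_one _ _).mpr (hedges e he)

lemma exists_evenEars_add_of_perm (D : EarDecomp G) {L : List (Ear G)} {P Q P' T : Ear G}
    (hL : Ear.IsSequence {D.root} L) (hperm : (D.ears ++ [P', T]).Perm (L ++ [P, Q]))
    (hedges : ∀ e, [P', T].countP (fun E => e ∈ E.edges) =
      [P, Q].countP (fun E => e ∈ E.edges)) :
    ∃ D' : EarDecomp G, D'.evenEars + [P, Q].countP (fun E => Even E.walk.length) =
      D.evenEars + [P', T].countP (fun E => Even E.walk.length) := by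
  have hcount (f : Ear G → Bool) :
      L.countP f + [P, Q].countP f = D.ears.countP f + [P', T].countP f := by
    simpa only [List.countP_append] using (hperm.countP_eq f).symm
  refine ⟨ofIsSequence D.root L hL fun e he => ?_, hcount _⟩
  have := hcount (fun E => e ∈ E.edges)
  rw [D.countP_mem_edges_eq_one he, hedges] at this
  omega

lemma exists_evenEars_add_two_eq_of_eq_append (D : EarDecomp G) {A B C : List (Ear G)}
    {P Q : Ear G} {z : V} (hsplit : D.ears = A ++ P :: (B ++ Q :: C))
    (hP2 : P.walk.length = 2) (hz : z ∈ P.internal) (hQ : Q.IsOpen)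
    (hQend : Q.a = z ∨ Q.b = z) (hQeven : Even Q.walk.length)
    (hB : ∀ F ∈ B, (F.a = z ∨ F.b = z) → F.IsTrivial)
    (hPQ : P.a ∈ Q.vertices → P.a ∈ Q.endpoints) (hPQe : ∀ e ∈ P.edges, e ∉ Q.edges) :
    ∃ D' : EarDecomp G, D'.evenEars + 2 = D.evenEars := by
  obtain ⟨hxz, hzy, hPwalk⟩ := Ear.exists_eq_cons_cons_nil_of_mem_internal hP2 hz
  have hxz' : P.a ≠ z := fun h => hz.2 (Or.inl h.symm)
  have hPe : P.edges = [s(P.a, z), s(z, P.b)] := by simp [Ear.edges, hPwalk]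
  obtain ⟨w, W, hW, hWlen, hWe, hWv, hwz, hQe⟩ := Ear.exists_isPath_from_endpoint hQ hQend
  have hxW : P.a ∈ W.support → P.a = w := fun hx => by
    simpa [hQe, hxz'] using hPQ (hWv ▸ hx)
  let P' := Ear.consPath hxz W hW hxW (by rw [hWe]; exact hPQe _ (by simp [hPe]))
  let T := trivialEar G hzy
  set B₁ := B.filter fun F => F.a ≠ z ∧ F.b ≠ z
  set B₂ := B.filter fun F => !decide (F.a ≠ z ∧ F.b ≠ z)
  have hB₂ : ∀ F ∈ B₂, F ∈ B ∧ F.IsTrivial := fun F hF => by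
    obtain ⟨hFB, hFz⟩ := List.mem_filter.mp hF
    exact ⟨hFB, hB F hFB (by simp at hFz; tauto)⟩
  have hP'v : P'.vertices = insert P.a Q.vertices := by
    rw [← hWv]; ext; simp [P', Ear.consPath, Ear.vertices]
  have hseq := D.isSequence
  rw [hsplit, Ear.isSequence_append] at hseq
  have hnew := hseq.2.reattach (by ext; simp [Ear.vertices, hPwalk]) rfl hz hB hB₂ hQe hwz
    hP'v rfl (T := T) rfl rfl
  have hperm : (D.ears ++ [P', T]).Perm ((A ++ (B₁ ++ P' :: T :: (B₂ ++ C))) ++ [P, Q]) := by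
    classical
    refine List.perm_iff_count.mpr fun x => ?_
    have hB := (show (B₁ ++ B₂).Perm B from B.filter_append_perm _).count_eq x
    simp only [hsplit, List.count_append, List.count_cons, List.count_nil] at hB ⊢
    omega
  obtain ⟨D', hD'⟩ := D.exists_evenEars_add_of_perm
    (Ear.isSequence_append.mpr ⟨hseq.1, hnew⟩) hperm
    (Ear.countP_mem_edges_pair_eq hPe (Ear.isOpen_of_length_eq_two hP2) hxz'
      (fun e => by simp [P', Ear.consPath, Ear.edges, hWe]) rfl (hPQe _ (by simp [hPe])))
  refine ⟨D', ?_⟩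
  simp [hP2, hQeven, P', T, Ear.consPath, trivialEar, hWlen, Nat.even_add_one] at hD'
  omega

lemma exists_evenEars_add_two_eq (D : EarDecomp G) (hopen : D.IsOpen)
    {p q : Fin D.ears.length} {z : V}
    (hP2 : (D.ears.get p).walk.length = 2) (hz : z ∈ (D.ears.get p).internal) (hqp : q ≠ p)
    (hQend : (D.ears.get q).a = z ∨ (D.ears.get q).b = z)
    (hfirst : ∀ j : Fin D.ears.length, j ≠ p → ¬ (D.ears.get j).IsTrivial →
      ((D.ears.get j).a = z ∨ (D.ears.get j).b = z) → q ≤ j)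
    (hQeven : Even (D.ears.get q).walk.length) :
    ∃ D' : EarDecomp G, D'.evenEars + 2 = D.evenEars := by
  have hzQ : z ∈ (D.ears.get q).vertices := by
    rcases hQend with h | h <;> simp [← h, Ear.a_mem_vertices, Ear.b_mem_vertices]
  have hpq : p < q := lt_of_le_of_ne (D.le_of_mem_internal_of_mem_vertices hz hzQ) hqp.symm
  obtain ⟨A, B, C, hsplit, hB⟩ := D.ears.exists_eq_append_cons_append_cons hpq
  refine D.exists_evenEars_add_two_eq_of_eq_append hsplit hP2 hz (hopen q (by omega)) hQend
    hQeven ?_ ?_ fun e he => D.not_mem_edges_of_ne hqp.symm he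
  · intro F hF hFz
    obtain ⟨k, hpk, hkq, rfl⟩ := hB F hF
    by_contra hk
    exact absurd (hfirst k hpk.ne' hk hFz) (not_le.mpr hkq)
  · exact fun hx => by_contra fun h => absurd
      (D.le_of_mem_internal_of_mem_vertices ⟨hx, h⟩ (D.ears.get p).a_mem_vertices)
      (not_le.mpr hpq)

end EarDecomp

theorem statement_3_general {V : Type*} [DecidableEq V] (G : SimpleGraph V)
    (D : EarDecomp G) (hopen : D.IsOpen) (hmin : D.evenEars = phi G)
    (p q : Fin D.ears.length) (z : V)
    (hP2 : (D.ears.get p).walk.length = 2)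
    (hz : z ∈ (D.ears.get p).internal)
    (hqp : q ≠ p)
    (hQend : (D.ears.get q).a = z ∨ (D.ears.get q).b = z)
    (hfirst : ∀ j : Fin D.ears.length, j ≠ p → ¬ (D.ears.get j).IsTrivial →
      ((D.ears.get j).a = z ∨ (D.ears.get j).b = z) → q ≤ j) :
    Odd (D.ears.get q).walk.length := by
  by_contra hodd
  obtain ⟨D', hD'⟩ := D.exists_evenEars_add_two_eq hopen hP2 hz hqp hQend hfirst
    (Nat.not_odd_iff_even.mp hodd)
  have : phi G ≤ D'.evenEars := Nat.sInf_le ⟨D', rfl⟩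
  omega

/-- In an open ear-decomposition of a 2-vertex-connected graph with
exactly `φ(G)` even ears, if `P` is a `2`-ear with internal vertex `z` and `Q` is the
first nontrivial ear other than `P` with an endpoint at `z`, then `Q` is odd. -/
theorem statement_3 {V : Type*} [Fintype V] [DecidableEq V] (G : SimpleGraph V)
    (h2 : TwoVertexConnected G)
    (D : EarDecomp G) (hopen : D.IsOpen) (hmin : D.evenEars = phi G)
    (p q : Fin D.ears.length) (z : V)
    (hP2 : (D.ears.get p).walk.length = 2)
    (hz : z ∈ (D.ears.get p).internal)
    (hqp : q ≠ p)
    (hQnt : ¬ (D.ears.get q).IsTrivial)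
    (hQend : (D.ears.get q).a = z ∨ (D.ears.get q).b = z)
    (hfirst : ∀ j : Fin D.ears.length, j ≠ p → ¬ (D.ears.get j).IsTrivial →
      ((D.ears.get j).a = z ∨ (D.ears.get j).b = z) → q ≤ j) :
    Odd (D.ears.get q).walk.length :=
  statement_3_general G D hopen hmin p q z hP2 hz hqp hQend hfirst
end

section
/- Let G be a graph, M an eardrum in G, and U a nonempty finite set of vertices of G disjoint from V(M). Then every earmuff {P_f : f ∈ F} for M in which every path P_f has both of its endpoints in U satisfies |F| ≤ |U| − 1. In particular, if D is an open nice ear-decomposition of a 2-vertex-connected graph G, M is the eardrum arising from the pendant short ears of D, V_I is the set of internal vertices of non-pendant ears of D (including the vertex of P0), and every earmuff path has its endpoints in V_I, then µ(G,M) ≤ |V_I| − 1. -/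
open SimpleGraph

variable {V : Type*}

open Finset

/-! The path `P_f` has `f` as its set of internal vertices, so it has `#f + 1` edges, each
meeting `f`. As the members of `M` are disjoint and the endpoints avoid `V(M)`, the paths are
edge-disjoint, so their union is a forest with `∑ (#f + 1)` edges on at most `#U + ∑ #f`
vertices. A forest has fewer edges than vertices, whence `|F| < |U|`. For an ear-decomposition,
the members of the eardrum are the internal vertex sets of distinct short ears, which are nonempty
and pairwise disjoint, and `V_I` contains the root. -/

theorem SimpleGraph.IsAcyclic.card_edgeFinset_lt [Fintype V] [DecidableEq V]
    {H : SimpleGraph V} [Fintype H.edgeSet] (hH : H.IsAcyclic) {s : Finset V}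
    (hs : s.Nonempty) (hsub : ∀ ⦃u v⦄, H.Adj u v → u ∈ s) : #H.edgeFinset < #s := by
  classical
  obtain ⟨t, ht⟩ := hs
  obtain ⟨F, hHF, hFK, hF⟩ := ((connected_starGraph t).mono le_sup_right :
    (H ⊔ starGraph t).Connected).exists_isTree_le_of_le_of_isAcyclic le_sup_left hH
  -- `F` is a spanning tree of `H ⊔ starGraph t`, so each vertex outside `s` is a leaf at `t`.
  have hout : sᶜ.map (Sym2.mkEmbedding t) ⊆ F.edgeFinset := by
    simp only [subset_iff, mem_map, mem_compl, Sym2.mkEmbedding_apply]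
    rintro _ ⟨v, hv, rfl⟩
    have hvt : v ≠ t := fun h => hv (h ▸ ht)
    obtain ⟨w, hw⟩ : ∃ w, F.Adj v w := by
      obtain ⟨p⟩ := hF.connected v t
      cases p with
      | nil => exact absurd rfl hvt
      | cons h _ => exact ⟨_, h⟩
    rcases hFK hw with hvw | hvw
    · exact absurd (hsub hvw) hv
    · obtain rfl : w = t := by simp only [starGraph_adj] at hvw; tauto
      simpa [Sym2.eq_swap] using hw
  have hdisj : Disjoint H.edgeFinset (sᶜ.map (Sym2.mkEmbedding t)) := by
    simp only [disjoint_right, mem_map, mem_compl, mem_edgeFinset, Sym2.mkEmbedding_apply]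
    rintro _ ⟨v, hv, rfl⟩ h
    exact hv (hsub h.symm)
  have hcard := card_le_card (union_subset (edgeFinset_mono hHF) hout)
  rw [card_union_of_disjoint hdisj, card_map, card_compl] at hcard
  have := hF.card_edgeFinset
  have := card_le_univ s
  omega

namespace Earmuff

variable {G : SimpleGraph V} {M : Finset (Finset V)} (em : Earmuff G M)
  {pr : Finset V × Ear G}

theorem nodup : em.pairs.Nodup := List.Nodup.of_map Prod.fst em.nodup_fst

theorem endpoints_notMem_fst (hpr : pr ∈ em.pairs) : pr.2.a ∉ pr.1 ∧ pr.2.b ∉ pr.1 :=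
  ⟨fun h => (em.ends_outside pr hpr).1 ⟨pr.1, em.mem_M pr hpr, h⟩,
    fun h => (em.ends_outside pr hpr).2 ⟨pr.1, em.mem_M pr hpr, h⟩⟩

theorem mem_support_iff (hpr : pr ∈ em.pairs) {v : V} :
    v ∈ pr.2.walk.support ↔ v ∈ pr.1 ∨ v = pr.2.a ∨ v = pr.2.b := by
  by_cases hv : v = pr.2.a ∨ v = pr.2.b
  · rcases hv with rfl | rfl <;> simp
  · have := Set.ext_iff.mp (em.internal_eq pr hpr) v
    simp only [Ear.internal, Ear.vertices, Ear.endpoints, Set.mem_sdiff, Set.mem_ofPred_eq,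
      Set.mem_insert_iff, Set.mem_singleton_iff, Finset.mem_coe] at this
    tauto

theorem length_eq [DecidableEq V] (hpr : pr ∈ em.pairs) : pr.2.walk.length = #pr.1 + 1 := by
  obtain ⟨hab, hpath⟩ := em.is_path pr hpr
  obtain ⟨ha, hb⟩ := em.endpoints_notMem_fst hpr
  have hsupp : pr.2.walk.support.toFinset = insert pr.2.a (insert pr.2.b pr.1) := by
    ext v
    simp only [List.mem_toFinset, em.mem_support_iff hpr, Finset.mem_insert]
    tauto
  have hcard := congrArg Finset.card hsupp
  rw [List.toFinset_card_of_nodup hpath.support_nodup, Walk.length_support,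
    Finset.card_insert_of_notMem (by simp [hab, ha]), Finset.card_insert_of_notMem hb] at hcard
  omega

/-- An edge of `P_f` avoiding `f` would join the two endpoints, which a path of length
`#f + 1 ≥ 2` cannot contain. -/
theorem exists_mem_fst_of_mem_edges (hMne : ∀ f ∈ M, f.Nonempty) (hpr : pr ∈ em.pairs)
    {e : Sym2 V} (he : e ∈ pr.2.walk.edges) : ∃ v ∈ e, v ∈ pr.1 := by
  classical
  induction e using Sym2.ind with
  | _ x y =>
    by_contra! hout
    have hx := (em.mem_support_iff hpr).mp (Walk.fst_mem_support_of_mem_edges _ he)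
    have hy := (em.mem_support_iff hpr).mp (Walk.snd_mem_support_of_mem_edges _ he)
    have hxy : x ≠ y := (pr.2.walk.adj_of_mem_edges he).ne
    replace hx : x = pr.2.a ∨ x = pr.2.b := hx.resolve_left (hout x (Sym2.mem_mk_left x y))
    replace hy : y = pr.2.a ∨ y = pr.2.b := hy.resolve_left (hout y (Sym2.mem_mk_right x y))
    have hab : s(pr.2.a, pr.2.b) ∈ pr.2.walk.edges := by
      rcases hx with rfl | rfl <;> rcases hy with rfl | rfl
      all_goals first
        | exact absurd rfl hxy
        | simpa [Sym2.eq_swap] using he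
    have hlen := (em.is_path pr hpr).2.length_eq_one_of_mem_edges hab
    rw [em.length_eq hpr, Nat.add_eq_right, Finset.card_eq_zero] at hlen
    exact (hMne pr.1 (em.mem_M pr hpr)).ne_empty hlen

theorem disjoint_edges [DecidableEq V] (hMne : ∀ f ∈ M, f.Nonempty)
    (hMdisj : (M : Set (Finset V)).PairwiseDisjoint id) {pr' : Finset V × Ear G}
    (hpr : pr ∈ em.pairs) (hpr' : pr' ∈ em.pairs) (hprpr' : pr ≠ pr') :
    Disjoint pr.2.walk.edges.toFinset pr'.2.walk.edges.toFinset := by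
  rw [Finset.disjoint_left]
  intro e he he'
  rw [List.mem_toFinset] at he he'
  obtain ⟨v, hve, hv⟩ := em.exists_mem_fst_of_mem_edges hMne hpr he
  have hv' : v ∈ pr'.2.walk.support := by
    induction e using Sym2.ind with
    | _ x y =>
      rcases Sym2.mem_iff.mp hve with rfl | rfl
      · exact Walk.fst_mem_support_of_mem_edges _ he'
      · exact Walk.snd_mem_support_of_mem_edges _ he'
  have hvM : v ∈ eardrumVerts M := ⟨pr.1, em.mem_M pr hpr, hv⟩
  rcases (em.mem_support_iff hpr').mp hv' with hv' | rfl | rfl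
  · have hfst : pr.1 ≠ pr'.1 := fun h => hprpr' (List.inj_on_of_nodup_map em.nodup_fst hpr hpr' h)
    exact Finset.disjoint_left.mp (hMdisj (em.mem_M pr hpr) (em.mem_M pr' hpr') hfst) hv hv'
  · exact (em.ends_outside pr' hpr').1 hvM
  · exact (em.ends_outside pr' hpr').2 hvM

theorem length_lt_card [DecidableEq V] [Fintype V] (hMne : ∀ f ∈ M, f.Nonempty)
    (hMdisj : (M : Set (Finset V)).PairwiseDisjoint id) {U : Finset V} (hU : U.Nonempty)
    (hends : ∀ pr ∈ em.pairs, pr.2.a ∈ U ∧ pr.2.b ∈ U) : em.pairs.length < #U := by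
  classical
  set P := em.pairs.toFinset
  set S := P.biUnion fun pr => pr.2.walk.edges.toFinset
  have hS : #S = ∑ pr ∈ P, #pr.1 + #P := by
    rw [card_biUnion fun pr hpr pr' hpr' => em.disjoint_edges hMne hMdisj
      (List.mem_toFinset.mp hpr) (List.mem_toFinset.mp hpr'), card_eq_sum_ones P,
      ← sum_add_distrib]
    refine sum_congr rfl fun pr hpr => ?_
    rw [List.mem_toFinset] at hpr
    rw [List.toFinset_card_of_nodup (em.is_path pr hpr).2.isTrail.edges_nodup,
      Walk.length_edges, em.length_eq hpr]
  have hverts : #(U ∪ P.biUnion Prod.fst) ≤ #U + ∑ pr ∈ P, #pr.1 :=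
    (card_union_le _ _).trans (Nat.add_le_add_left card_biUnion_le _)
  have hforest : #S < #(U ∪ P.biUnion Prod.fst) := by
    have hH : (fromEdgeSet (S : Set (Sym2 V))).IsAcyclic := by
      convert em.forest using 3
      ext e
      simp [S, P, Ear.edges]
    convert hH.card_edgeFinset_lt (hU.mono subset_union_left) ?_ using 2
    · ext e
      simp only [mem_edgeFinset, edgeSet_fromEdgeSet, Set.mem_sdiff, mem_coe,
        Sym2.mem_diagSet, iff_self_and]
      intro he
      obtain ⟨pr, -, he⟩ := mem_biUnion.mp he
      exact G.not_isDiag_of_mem_edgeSet (pr.2.walk.edges_subset_edgeSet (List.mem_toFinset.mp he))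
    · intro u v huv
      obtain ⟨pr, hpr, he⟩ := mem_biUnion.mp ((fromEdgeSet_adj _).mp huv).1
      rw [List.mem_toFinset] at hpr he
      rcases (em.mem_support_iff hpr).mp (Walk.fst_mem_support_of_mem_edges _ he)
        with hu | rfl | rfl
      · exact mem_union_right _ (mem_biUnion.mpr ⟨pr, List.mem_toFinset.mpr hpr, hu⟩)
      · exact mem_union_left _ (hends pr hpr).1
      · exact mem_union_left _ (hends pr hpr).2
  have hP : #P = em.pairs.length := List.toFinset_card_of_nodup em.nodup
  omega

end Earmuff

namespace Ear

variable {G : SimpleGraph V}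

theorem coe_internalFinset [DecidableEq V] (P : Ear G) :
    (P.internalFinset : Set V) = P.internal := by
  ext v
  simp [internalFinset, internal, vertices, endpoints]

theorem internal_nonempty (P : Ear G) (h : 2 ≤ P.walk.length) : P.internal.Nonempty := by
  cases P with | mk a b p _ hear =>
  rcases p with _ | @⟨_, x, _, h₁, _ | @⟨_, y, _, h₂, q⟩⟩
  · simp at h
  · simp at h
  refine ⟨x, ⟨by simp [vertices], ?_⟩⟩
  have hb : x ≠ b := by
    rcases hear with ⟨-, hp⟩ | ⟨rfl, -⟩
    · have := hp.support_nodup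
      simp only [Walk.support_cons, List.nodup_cons] at this
      exact fun hxb => this.2.1 (hxb ▸ q.end_mem_support)
    · exact h₁.ne.symm
  simp only [endpoints, Set.mem_insert_iff, Set.mem_singleton_iff, not_or]
  exact ⟨h₁.ne.symm, hb⟩

end Ear

namespace EarDecomp

variable {G : SimpleGraph V} (D : EarDecomp G)

theorem notMem_vertices_of_mem_internal {i j : Fin D.ears.length} (hij : (i : ℕ) < j) {v : V}
    (hv : v ∈ (D.ears.get j).internal) : v ∉ (D.ears.get i).vertices := fun hvi =>
  (Set.eq_empty_iff_forall_notMem.mp (D.internal_new j)) v ⟨hv, Or.inr ⟨i, hij, hvi⟩⟩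

theorem disjoint_internal {i j : Fin D.ears.length} (hij : i ≠ j) :
    Disjoint (D.ears.get i).internal (D.ears.get j).internal := by
  rw [Set.disjoint_left]
  intro v hvi hvj
  rcases lt_or_gt_of_ne (Fin.val_ne_of_ne hij) with h | h
  · exact D.notMem_vertices_of_mem_internal h hvj hvi.1
  · exact D.notMem_vertices_of_mem_internal h hvi hvj.1

variable [DecidableEq V]

theorem exists_of_mem_eardrum {f : Finset V} (hf : f ∈ D.eardrum) :
    ∃ i, (D.ears.get i).IsShort ∧ (D.ears.get i).internalFinset = f := by
  simp only [eardrum, Finset.mem_image, Finset.mem_filter] at hf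
  obtain ⟨i, ⟨-, hshort, -⟩, rfl⟩ := hf
  exact ⟨i, hshort, rfl⟩

theorem nonempty_of_mem_eardrum {f : Finset V} (hf : f ∈ D.eardrum) : f.Nonempty := by
  obtain ⟨i, hshort, rfl⟩ := D.exists_of_mem_eardrum hf
  rw [← Finset.coe_nonempty, Ear.coe_internalFinset]
  exact (D.ears.get i).internal_nonempty (by rcases hshort with h | h <;> omega)

theorem pairwiseDisjoint_eardrum : (D.eardrum : Set (Finset V)).PairwiseDisjoint id := by
  intro f hf g hg hfg
  obtain ⟨i, -, rfl⟩ := D.exists_of_mem_eardrum hf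
  obtain ⟨j, -, rfl⟩ := D.exists_of_mem_eardrum hg
  rw [Function.onFun, id, id, ← Finset.disjoint_coe, Ear.coe_internalFinset,
    Ear.coe_internalFinset]
  exact D.disjoint_internal fun hij => hfg (hij ▸ rfl)

end EarDecomp

theorem IsEardrum.nonempty [DecidableEq V] {G : SimpleGraph V} {M : Finset (Finset V)}
    (hM : IsEardrum G M) {f : Finset V} (hf : f ∈ M) : f.Nonempty := by
  rcases hM.1 f hf with ⟨v, rfl⟩ | ⟨u, v, -, rfl⟩ <;> simp

theorem mu_le {G : SimpleGraph V} {M : Finset (Finset V)} {n : ℕ}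
    (h : ∀ em : Earmuff G M, em.pairs.length ≤ n) : mu G M ≤ n :=
  csSup_le' fun _ ⟨em, hem⟩ => hem ▸ h em

/-- Lemma 3. If `M` is an eardrum in `G` and `U` is a nonempty finite
set of vertices disjoint from `V(M)`, then every earmuff for `M` all of whose paths have
both endpoints in `U` has at most `|U| - 1` paths.  In particular, for an open nice
ear-decomposition `D` of a 2-vertex-connected graph `G` with eardrum `M` arising from the
pendant short ears, if every earmuff path has its endpoints in `V_I`, then
`µ(G, M) ≤ |V_I| - 1`. -/
theorem statement_7 {V : Type*} [Fintype V] [DecidableEq V] (G : SimpleGraph V) :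
    (∀ M : Finset (Finset V), IsEardrum G M →
      ∀ U : Finset V, U.Nonempty → (∀ u ∈ U, u ∉ eardrumVerts M) →
      ∀ em : Earmuff G M, (∀ pr ∈ em.pairs, pr.2.a ∈ U ∧ pr.2.b ∈ U) →
        em.pairs.length ≤ U.card - 1) ∧
    (∀ D : EarDecomp G, TwoVertexConnected G → D.IsNice →
      (∀ em : Earmuff G D.eardrum, ∀ pr ∈ em.pairs, pr.2.a ∈ D.VI ∧ pr.2.b ∈ D.VI) →
      mu G D.eardrum ≤ D.VI.card - 1) := by
  refine ⟨fun M hM U hU _ em hends => ?_, fun D _ _ hends => mu_le fun em => ?_⟩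
  · exact Nat.le_sub_one_of_lt (em.length_lt_card (fun _ => hM.nonempty) hM.2 hU hends)
  · exact Nat.le_sub_one_of_lt (em.length_lt_card (fun _ => D.nonempty_of_mem_eardrum)
      D.pairwiseDisjoint_eardrum ⟨D.root, Finset.mem_insert_self _ _⟩ (hends em))
end

section
/- Let G be a 2-vertex-connected simple graph with minimum degree at least 3, and let D be an open nice ear-decomposition of G with exactly φ(G) even ears. Let π be the number of pendant (nontrivial) ears of D and let E' be the set of edges of G lying in nontrivial ears of D. Then |E'| ≤ (5/4)(|V(G)| − 1) + (3/4)φ(G) + (1/2)π; in particular |E'| ≤ (5/4)L_φ(G) + (1/2)π, where L_φ(G) = |V(G)| + φ(G) − 1. -/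
open SimpleGraph

variable {V : Type*}

/-! Every nontrivial ear of length `L` brings `L - 1` new vertices, and
`L ≤ 5/4·(L - 1) + 3/4·[L even] + 1/2·[L ∈ {2, 3}]` for `L ≥ 2`. Summing over the
nontrivial ears, the new vertices number at most `|V| - 1`, the even ears at most `φ(G)`,
and the short ears, being pendant in a nice decomposition, at most `π`. -/

lemma List.countP_eq_card_filter_get {α : Type*} (l : List α) (p : α → Prop)
    [DecidablePred p] :
    l.countP (fun a => decide (p a)) =
      (Finset.univ.filter fun i : Fin l.length => p (l.get i)).card := by
  conv_lhs => rw [← List.map_get_finRange l]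
  rw [List.countP_map, List.countP_eq_length_filter, Fin.univ_def]
  rfl

lemma cast_le_ear_charge {L : ℕ} (hL : 2 ≤ L) :
    (L : ℚ) ≤ 5/4 * ((L : ℚ) - 1) + (if Even L then 3/4 else 0) +
      (if L = 2 ∨ L = 3 then 1/2 else 0) := by
  obtain ⟨k, rfl | rfl⟩ := Nat.even_or_odd' L
  · rcases (by omega : k = 1 ∨ 2 ≤ k) with rfl | hk
    · norm_num
    · have hk' : (2 : ℚ) ≤ k := by exact_mod_cast hk
      rw [if_pos (even_two_mul k), if_neg (by omega)]
      push_cast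
      linarith
  · rcases (by omega : k = 1 ∨ 2 ≤ k) with rfl | hk
    · norm_num
    · have hk' : (2 : ℚ) ≤ k := by exact_mod_cast hk
      rw [if_neg (Nat.not_even_iff_odd.mpr (odd_two_mul_add_one k)), if_neg (by omega)]
      push_cast
      linarith

namespace Ear

variable {G : SimpleGraph V}

lemma edges_nodup (P : Ear G) : P.edges.Nodup := by
  rcases P.ear with ⟨-, hp⟩ | ⟨_, hc⟩
  · exact hp.isTrail.edges_nodup
  · simpa [edges] using hc.isTrail.edges_nodup

lemma mem_internalFinset [DecidableEq V] (P : Ear G) (x : V) :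
    x ∈ P.internalFinset ↔ x ∈ P.internal := by
  simp [internalFinset, internal, vertices, endpoints]

lemma card_internalFinset [DecidableEq V] (P : Ear G) :
    P.internalFinset.card = P.walk.length - 1 := by
  obtain ⟨a, b, w, hl, hpath | ⟨rfl, hc⟩⟩ := P
  · rw [internalFinset, Finset.card_sdiff_of_subset,
      List.toFinset_card_of_nodup hpath.2.support_nodup, Walk.length_support,
      Finset.card_pair hpath.1]
    · rfl
    · simp [Finset.insert_subset_iff]
  · rw [Walk.copy_rfl_rfl] at hc
    have hmem : a ∈ w.support.tail := by
      cases w with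
      | nil => simp at hl
      | cons h q => simp
    have htail : w.support.toFinset = w.support.tail.toFinset := by
      rw [← w.cons_tail_support, List.toFinset_cons, List.tail_cons,
        Finset.insert_eq_self.mpr (List.mem_toFinset.mpr hmem)]
    simp only [internalFinset, htail, Finset.pair_eq_singleton, Finset.sdiff_singleton_eq_erase]
    rw [Finset.card_erase_of_mem (List.mem_toFinset.mpr hmem),
      List.toFinset_card_of_nodup hc.support_nodup, List.length_tail, Walk.length_support]
    rfl

end Ear

namespace EarDecomp

variable {G : SimpleGraph V} (D : EarDecomp G)

lemma disjoint_edges [DecidableEq V] {i j : Fin D.ears.length} (hij : i ≠ j) :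
    Disjoint (D.ears.get i).edges.toFinset (D.ears.get j).edges.toFinset := by
  refine Finset.disjoint_left.mpr fun e hei hej => hij ?_
  rw [List.mem_toFinset] at hei hej
  obtain ⟨k, -, hk⟩ := D.edge_cover e ((D.ears.get i).walk.edges_subset_edgeSet hei)
  exact (hk i hei).trans (hk j hej).symm

lemma notMem_internal_of_lt {i j : Fin D.ears.length} (hij : (i : ℕ) < j) {x : V}
    (hx : x ∈ (D.ears.get i).vertices) : x ∉ (D.ears.get j).internal := fun hxj =>
  (Set.eq_empty_iff_forall_notMem.mp (D.internal_new j) x) ⟨hxj, Or.inr ⟨i, hij, hx⟩⟩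

lemma disjoint_internalFinset [DecidableEq V] {i j : Fin D.ears.length} (hij : i ≠ j) :
    Disjoint (D.ears.get i).internalFinset (D.ears.get j).internalFinset := by
  wlog h : (i : ℕ) < j generalizing i j
  · exact (this hij.symm (by omega)).symm
  refine Finset.disjoint_left.mpr fun x hxi hxj => ?_
  rw [Ear.mem_internalFinset] at hxi hxj
  exact D.notMem_internal_of_lt h hxi.1 hxj

lemma root_notMem_internal (i : Fin D.ears.length) : D.root ∉ (D.ears.get i).internal :=
  fun h => (Set.eq_empty_iff_forall_notMem.mp (D.internal_new i) _) ⟨h, Set.mem_insert _ _⟩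

lemma sum_card_internalFinset_lt [Fintype V] [DecidableEq V] :
    ∑ i, (D.ears.get i).internalFinset.card < Fintype.card V := by
  rw [← Finset.card_biUnion fun i _ j _ hij => D.disjoint_internalFinset hij]
  refine Finset.card_lt_card ⟨Finset.subset_univ _, fun h => ?_⟩
  obtain ⟨i, -, hi⟩ := Finset.mem_biUnion.mp (h (Finset.mem_univ D.root))
  exact D.root_notMem_internal i ((Ear.mem_internalFinset _ _).mp hi)

lemma sum_length_sub_one_le [Fintype V] [DecidableEq V] (s : Finset (Fin D.ears.length)) :
    ∑ i ∈ s, (((D.ears.get i).walk.length : ℚ) - 1) ≤ Fintype.card V - 1 := by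
  have hcast (i) :
      ((D.ears.get i).walk.length : ℚ) - 1 = (D.ears.get i).internalFinset.card := by
    rw [Ear.card_internalFinset, Nat.cast_sub (D.ears.get i).length_pos, Nat.cast_one]
  have hlt : (∑ i, (D.ears.get i).internalFinset.card : ℚ) + 1 ≤ Fintype.card V := by
    exact_mod_cast D.sum_card_internalFinset_lt
  calc ∑ i ∈ s, (((D.ears.get i).walk.length : ℚ) - 1)
      = ∑ i ∈ s, ((D.ears.get i).internalFinset.card : ℚ) :=
        Finset.sum_congr rfl fun i _ => hcast i
    _ ≤ ∑ i, ((D.ears.get i).internalFinset.card : ℚ) :=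
        Finset.sum_le_sum_of_subset_of_nonneg (Finset.subset_univ s) fun _ _ _ =>
          Nat.cast_nonneg _
    _ ≤ Fintype.card V - 1 := by linarith

lemma card_nontrivialEdges [DecidableEq V]
    [DecidablePred fun i : Fin D.ears.length => ¬ (D.ears.get i).IsTrivial] :
    D.nontrivialEdges.card =
      ∑ i ∈ Finset.univ.filter fun i => ¬ (D.ears.get i).IsTrivial,
        (D.ears.get i).walk.length := by
  rw [nontrivialEdges, Finset.card_biUnion fun i _ j _ hij => D.disjoint_edges hij]
  refine Finset.sum_congr (by congr!) fun i _ => ?_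
  rw [List.toFinset_card_of_nodup (D.ears.get i).edges_nodup, Ear.edges, Walk.length_edges]

lemma evenEars_eq_card :
    D.evenEars =
      (Finset.univ.filter fun i : Fin D.ears.length => Even (D.ears.get i).walk.length).card :=
  D.ears.countP_eq_card_filter_get fun P => Even P.walk.length

lemma card_short_le_numPendant (hpend : ∀ i, (D.ears.get i).IsShort → D.IsPendant i)
    (s : Finset (Fin D.ears.length))
    [DecidablePred fun i : Fin D.ears.length => (D.ears.get i).IsShort] :
    (s.filter fun i => (D.ears.get i).IsShort).card ≤ D.numPendant := by
  classical
  rw [numPendant]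
  exact Finset.card_le_card fun i hi => by
    simpa using hpend i (Finset.mem_filter.mp hi).2

lemma card_nontrivialEdges_le [Fintype V] [DecidableEq V]
    (hpend : ∀ i, (D.ears.get i).IsShort → D.IsPendant i) :
    (D.nontrivialEdges.card : ℚ) ≤
      5/4 * ((Fintype.card V : ℚ) - 1) + 3/4 * (D.evenEars : ℚ) +
        1/2 * (D.numPendant : ℚ) := by
  classical
  set F := Finset.univ.filter fun i : Fin D.ears.length => ¬ (D.ears.get i).IsTrivial
  set L := fun i : Fin D.ears.length => (D.ears.get i).walk.length
  have hcharge : ∀ i ∈ F, (L i : ℚ) ≤ 5/4 * ((L i : ℚ) - 1) +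
      (if Even (L i) then 3/4 else 0) + (if L i = 2 ∨ L i = 3 then 1/2 else 0) := fun i hi =>
    cast_le_ear_charge <| Nat.lt_of_le_of_ne (D.ears.get i).length_pos fun h =>
      (Finset.mem_filter.mp hi).2 h.symm
  have heven : (F.filter fun i => Even (L i)).card ≤ D.evenEars := by
    rw [evenEars_eq_card]
    exact Finset.card_le_card (Finset.filter_subset_filter _ (Finset.subset_univ F))
  have hshort : (F.filter fun i => L i = 2 ∨ L i = 3).card ≤ D.numPendant := by
    convert D.card_short_le_numPendant hpend F
    exact Iff.rfl
  calc (D.nontrivialEdges.card : ℚ) = ∑ i ∈ F, (L i : ℚ) := by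
        rw [D.card_nontrivialEdges, Nat.cast_sum]
    _ ≤ ∑ i ∈ F, (5/4 * ((L i : ℚ) - 1) + (if Even (L i) then 3/4 else 0) +
          (if L i = 2 ∨ L i = 3 then 1/2 else 0)) := Finset.sum_le_sum hcharge
    _ = 5/4 * ∑ i ∈ F, ((L i : ℚ) - 1) + 3/4 * (F.filter fun i => Even (L i)).card +
          1/2 * (F.filter fun i => L i = 2 ∨ L i = 3).card := by
        rw [Finset.sum_add_distrib, Finset.sum_add_distrib, ← Finset.mul_sum, Finset.sum_ite,
          Finset.sum_ite]
        simp only [Finset.sum_const, nsmul_eq_mul]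
        ring
    _ ≤ _ := by
        gcongr
        exact D.sum_length_sub_one_le F

end EarDecomp

theorem statement_9_general {V : Type*} [Fintype V] [DecidableEq V] (G : SimpleGraph V)
    (D : EarDecomp G) (hnice : D.IsNice) (hmin : D.evenEars = phi G) :
    (D.nontrivialEdges.card : ℚ) ≤
        5/4 * ((Fintype.card V : ℚ) - 1) + 3/4 * (phi G : ℚ) +
          1/2 * (D.numPendant : ℚ) ∧
    (D.nontrivialEdges.card : ℚ) ≤
        5/4 * ((Fintype.card V : ℚ) + (phi G : ℚ) - 1) + 1/2 * (D.numPendant : ℚ) := by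
  have hbound := D.card_nontrivialEdges_le hnice.2.1
  rw [hmin] at hbound
  exact ⟨hbound, by linarith [(phi G).cast_nonneg (α := ℚ)]⟩

/-- Claim 1 of Theorem 3. For an open nice ear-decomposition `D` with
exactly `φ(G)` even ears of a 2-vertex-connected graph `G` of minimum degree at least `3`,
the number of edges in nontrivial ears is at most
`(5/4)(|V| - 1) + (3/4)φ(G) + (1/2)π ≤ (5/4)·L_φ(G) + (1/2)π`. -/
theorem statement_9 {V : Type*} [Fintype V] [DecidableEq V] (G : SimpleGraph V)
    [DecidableRel G.Adj]
    (h2 : TwoVertexConnected G) (hdeg : ∀ v : V, 3 ≤ G.degree v)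
    (D : EarDecomp G) (hnice : D.IsNice) (hmin : D.evenEars = phi G) :
    (D.nontrivialEdges.card : ℚ) ≤
        5/4 * ((Fintype.card V : ℚ) - 1) + 3/4 * (phi G : ℚ) +
          1/2 * (D.numPendant : ℚ) ∧
    (D.nontrivialEdges.card : ℚ) ≤
        5/4 * ((Fintype.card V : ℚ) + (phi G : ℚ) - 1) + 1/2 * (D.numPendant : ℚ) :=
  statement_9_general G D hnice hmin
end

section
/- Let G be a 2-vertex-connected simple graph, let n(G) be the number of vertices of G having degree exactly 2, and let G' be the graph obtained from G by replacing every degree-2 vertex u by a copy of K4 (the complete graph on 4 vertices), where the two edges formerly incident to u are attached to two distinct vertices of that copy. Then G' is a simple 2-vertex-connected graph with minimum degree at least 3, and OPT_2VC(G') = OPT_2VC(G) + 3·n(G). -/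
open SimpleGraph

variable {V : Type*}

/-!
A 2-vertex-connected spanning subgraph `H` of `G` lifts to one of `G'` with exactly `3·n(G)`
more edges: keep the edges of `H` and thread the path `inl u – (u, 1) – (u, 2) – (u, 0)`
through each gadget, which subdivides the edge `u – f u` three times. Conversely, contracting
every gadget of a 2-vertex-connected spanning subgraph `H'` of `G'` gives one of `G`. The
vertices `(u, 1)` and `(u, 2)` have all their neighbours inside the gadget and degree at least
`2`, so at least three edges of `H'` are lost in each gadget.
-/

namespace SimpleGraph

variable {W U : Type*}

theorem Reachable.map_of_adj {K : SimpleGraph W} {K' : SimpleGraph U} (φ : W → U)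
    (h : ∀ a b, K.Adj a b → K'.Reachable (φ a) (φ b)) {a b : W} (hab : K.Reachable a b) :
    K'.Reachable (φ a) (φ b) := by
  rw [reachable_iff_reflTransGen] at hab ⊢
  exact Relation.ReflTransGen.lift' φ
    (fun a b hab => (reachable_iff_reflTransGen _ _).1 (h a b hab)) a b hab

def contract (π : W → U) (K : SimpleGraph W) : SimpleGraph U :=
  fromEdgeSet (Sym2.map π '' K.edgeSet)

variable {π : W → U} {K : SimpleGraph W}

theorem contract_adj_of_adj {p q : W} (h : K.Adj p q) (hne : π p ≠ π q) :
    (K.contract π).Adj (π p) (π q) :=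
  (fromEdgeSet_adj _).2 ⟨⟨s(p, q), h, rfl⟩, hne⟩

theorem contract_le {G : SimpleGraph U} (h : ∀ p q, K.Adj p q → π p ≠ π q → G.Adj (π p) (π q)) :
    K.contract π ≤ G := by
  intro a b hab
  obtain ⟨⟨e, he, hea⟩, hne⟩ := (fromEdgeSet_adj _).1 hab
  induction e using Sym2.ind with
  | _ p q =>
    rw [Sym2.map_mk, Sym2.eq_iff] at hea
    rcases hea with ⟨rfl, rfl⟩ | ⟨rfl, rfl⟩
    · exact h p q he hne
    · exact (h p q he hne.symm).symm

theorem ncard_edgeSet_contract_le [Finite W] :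
    (K.contract π).edgeSet.ncard ≤ (K.edgeSet \ {e | (Sym2.map π e).IsDiag}).ncard := by
  refine (Set.ncard_le_ncard ?_ (Set.toFinite _)).trans (Set.ncard_image_le (f := Sym2.map π))
  intro e he
  rw [contract, edgeSet_fromEdgeSet] at he
  obtain ⟨⟨e, he, rfl⟩, hdiag⟩ := he
  exact ⟨e, ⟨he, hdiag⟩, rfl⟩

theorem eq_or_eq_of_degree_eq_two [Fintype W] [DecidableRel K.Adj] {v a b c : W}
    (hv : K.degree v = 2) (ha : K.Adj v a) (hb : K.Adj v b) (hab : a ≠ b) (hc : K.Adj v c) :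
    c = a ∨ c = b := by
  classical
  have h : K.neighborFinset v = {a, b} :=
    (Finset.eq_of_subset_of_card_le (by intro t; simp only [Finset.mem_insert,
      Finset.mem_singleton, mem_neighborFinset]; rintro (rfl | rfl) <;> assumption)
      (by rw [card_neighborFinset_eq_degree, hv, Finset.card_pair hab])).symm
  simpa [h] using (mem_neighborFinset K v c).2 hc

end SimpleGraph

theorem exists_ne_ne_of_three_le_card {W : Type*} (h : 3 ≤ Nat.card W) (x y : W) :
    ∃ z, z ≠ x ∧ z ≠ y :=
  have : Finite W := Nat.finite_of_card_ne_zero (by omega)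
  Cardinal.exists_ne_ne_of_three_le (by rw [← Nat.cast_card]; exact_mod_cast h) x y

section TwoVertexConnected

variable {W : Type*} {K : SimpleGraph W}

theorem twoVertexConnected_iff : TwoVertexConnected K ↔
    3 ≤ Nat.card W ∧ ∀ x a b, a ≠ x → b ≠ x → (K.deleteIncidenceSet x).Reachable a b := by
  refine and_congr_right fun h3 => forall_congr' fun x => ?_
  constructor
  · intro hx a b ha hb
    let φ : K.induce {x}ᶜ →g K.deleteIncidenceSet x :=
      ⟨Subtype.val, fun {p q} h => deleteIncidenceSet_adj.2 ⟨h, p.2, q.2⟩⟩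
    exact (hx.preconnected ⟨a, ha⟩ ⟨b, hb⟩).map φ
  · intro hx
    obtain ⟨y, hy, -⟩ := exists_ne_ne_of_three_le_card h3 x x
    have : Nonempty ({x}ᶜ : Set W) := ⟨⟨y, hy⟩⟩
    refine ⟨fun ⟨a, ha⟩ ⟨b, hb⟩ => ?_⟩
    obtain ⟨w⟩ := hx a b ha hb
    -- `x` is isolated in `K.deleteIncidenceSet x`, so the walk never visits it
    have hw : ∀ v ∈ w.support, v ∈ ({x}ᶜ : Set W) := by
      rintro v hv rfl
      by_cases hnil : w.Nil
      · rw [Walk.nil_iff_support_eq.1 hnil, List.mem_singleton] at hv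
        exact ha hv.symm
      · obtain ⟨y, -, hxy⟩ := adj_of_mem_walk_support w hnil hv
        exact (deleteIncidenceSet_adj.1 hxy).2.1 rfl
    exact ⟨(w.induce _ hw).map (Hom.ofLE (by
      intro p q h; exact (deleteIncidenceSet_adj.1 h).1))⟩

theorem TwoVertexConnected.mono {K' : SimpleGraph W} (hK : TwoVertexConnected K) (h : K ≤ K') :
    TwoVertexConnected K' := by
  rw [twoVertexConnected_iff] at hK ⊢
  refine ⟨hK.1, fun x a b ha hb => (hK.2 x a b ha hb).mono fun p q hpq => ?_⟩
  obtain ⟨hpq, hp, hq⟩ := deleteIncidenceSet_adj.1 hpq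
  exact deleteIncidenceSet_adj.2 ⟨h hpq, hp, hq⟩

theorem TwoVertexConnected.exists_adj_ne (hK : TwoVertexConnected K) {v y : W} (hyv : y ≠ v) :
    ∃ z, z ≠ y ∧ K.Adj v z := by
  rw [twoVertexConnected_iff] at hK
  obtain ⟨z, hzv, hzy⟩ := exists_ne_ne_of_three_le_card hK.1 v y
  obtain ⟨w⟩ := hK.2 y v z hyv.symm hzy
  have hvz := deleteIncidenceSet_adj.1 (w.adj_snd (w.not_nil_of_ne hzv.symm))
  exact ⟨w.snd, hvz.2.2, hvz.1⟩

theorem TwoVertexConnected.two_le_degree [Fintype W] [DecidableRel K.Adj]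
    (hK : TwoVertexConnected K) (v : W) : 2 ≤ K.degree v := by
  obtain ⟨y, hyv, -⟩ := exists_ne_ne_of_three_le_card hK.1 v v
  obtain ⟨y, -, hy⟩ := hK.exists_adj_ne hyv
  obtain ⟨z, hzy, hz⟩ := hK.exists_adj_ne hy.ne'
  rw [← card_neighborFinset_eq_degree]
  exact Finset.one_lt_card.2 ⟨y, by simpa, z, by simpa, hzy.symm⟩

theorem TwoVertexConnected.adj_of_degree_eq_two [Fintype W] {G : SimpleGraph W}
    [DecidableRel G.Adj] (hK : TwoVertexConnected K) (hKG : K ≤ G) {v a : W}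
    (hv : G.degree v = 2) (ha : G.Adj v a) : K.Adj v a := by
  obtain ⟨y, hya, hy⟩ := hK.exists_adj_ne ha.ne'
  obtain ⟨z, hzy, hz⟩ := hK.exists_adj_ne hy.ne'
  obtain rfl | rfl := eq_or_eq_of_degree_eq_two hv ha (hKG hy) (Ne.symm hya) (hKG hz)
  exacts [hz, absurd rfl hzy]

end TwoVertexConnected

section OPT2VC

variable {W : Type*} {G : SimpleGraph V} {G' : SimpleGraph W}

theorem OPT2VC_le_ncard {H : SimpleGraph V} (hle : H ≤ G) (hH : TwoVertexConnected H) :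
    OPT2VC G ≤ H.edgeSet.ncard :=
  Nat.sInf_le ⟨H, hle, hH, rfl⟩

theorem TwoVertexConnected.exists_ncard_eq_OPT2VC (hG : TwoVertexConnected G) :
    ∃ H ≤ G, TwoVertexConnected H ∧ H.edgeSet.ncard = OPT2VC G :=
  Nat.sInf_mem (s := {n | ∃ H ≤ G, TwoVertexConnected H ∧ H.edgeSet.ncard = n})
    ⟨_, G, le_rfl, hG, rfl⟩

theorem OPT2VC_eq_add (hG : TwoVertexConnected G) (k : ℕ)
    (lift : ∀ H ≤ G, TwoVertexConnected H →
      ∃ H' ≤ G', TwoVertexConnected H' ∧ H'.edgeSet.ncard ≤ H.edgeSet.ncard + k)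
    (contract : ∀ H' ≤ G', TwoVertexConnected H' →
      ∃ H ≤ G, TwoVertexConnected H ∧ H.edgeSet.ncard + k ≤ H'.edgeSet.ncard) :
    OPT2VC G' = OPT2VC G + k := by
  obtain ⟨H, hHG, hH, hHopt⟩ := hG.exists_ncard_eq_OPT2VC
  obtain ⟨H', hH'G', hH', hH'card⟩ := lift H hHG hH
  obtain ⟨K', hK'G', hK', hK'opt⟩ := (hH'.mono hH'G').exists_ncard_eq_OPT2VC
  obtain ⟨K, hKG, hK, hKcard⟩ := contract K' hK'G' hK'
  have h₁ := OPT2VC_le_ncard hH'G' hH'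
  have h₂ := OPT2VC_le_ncard hKG hK
  omega

end OPT2VC

namespace DegreeTwoBlowup

variable [Fintype V] (G : SimpleGraph V) [DecidableRel G.Adj]

abbrev Vtx := V ⊕ ({u : V // G.degree u = 2} × Fin 3)

def owner : Vtx G → V := Sum.elim id fun z => z.1.1

def gadget (u : {u : V // G.degree u = 2}) : Set (Vtx G) :=
  {.inl u.1, .inr (u, 0), .inr (u, 1), .inr (u, 2)}

def gadgetPathEdge (z : {u : V // G.degree u = 2} × Fin 3) : Sym2 (Vtx G) :=
  ![s(.inl z.1.1, .inr (z.1, 1)), s(.inr (z.1, 1), .inr (z.1, 2)),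
    s(.inr (z.1, 2), .inr (z.1, 0))] z.2

variable {G}

@[simp] theorem owner_inl (v : V) : owner G (.inl v) = v := rfl

@[simp] theorem owner_inr (z : {u : V // G.degree u = 2} × Fin 3) : owner G (.inr z) = z.1 := rfl

theorem owner_eq_of_mem_gadget {u : {u : V // G.degree u = 2}} {x : Vtx G} (hx : x ∈ gadget G u) :
    owner G x = u := by
  rcases hx with rfl | rfl | rfl | rfl <;> rfl

theorem eq_inl_of_degree_ne_two {p : Vtx G} (hp : G.degree (owner G p) ≠ 2) :
    p = .inl (owner G p) := by
  rcases p with v | ⟨u, i⟩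
  · rfl
  · exact absurd u.2 hp

theorem mem_gadget_owner {x : Vtx G} (hx : G.degree (owner G x) = 2) :
    x ∈ gadget G ⟨owner G x, hx⟩ := by
  rcases x with v | ⟨u, i⟩
  · exact .inl rfl
  · fin_cases i
    exacts [.inr (.inl rfl), .inr (.inr (.inl rfl)), .inr (.inr (.inr rfl))]

theorem ncard_gadget (u : {u : V // G.degree u = 2}) : (gadget G u).ncard = 4 := by
  simp [gadget, Set.ncard_insert_of_notMem]

theorem map_owner_gadgetPathEdge (z : {u : V // G.degree u = 2} × Fin 3) :
    Sym2.map (owner G) (gadgetPathEdge G z) = s(z.1.1, z.1.1) := by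
  obtain ⟨u, i⟩ := z
  fin_cases i <;> rfl

theorem gadgetPathEdge_injective : Function.Injective (gadgetPathEdge G) := by
  rintro ⟨u, i⟩ ⟨u', i'⟩ h
  fin_cases i <;> fin_cases i' <;> simp_all [gadgetPathEdge]

variable [DecidableEq V] (G) (f : V → V)

def attach (a b : V) : Vtx G :=
  if h : G.degree a = 2 ∧ f a = b then .inr (⟨a, h.1⟩, 0) else .inl a

def blowup : SimpleGraph (Vtx G) := fromEdgeSet
  ({e | ∃ u, ∃ x ∈ gadget G u, ∃ y ∈ gadget G u, x ≠ y ∧ e = s(x, y)} ∪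
   {e | ∃ a b : V, G.Adj a b ∧ e = s(attach G f a b, attach G f b a)})

variable {G f}

@[simp] theorem owner_attach (a b : V) : owner G (attach G f a b) = a := by
  unfold attach; split <;> rfl

theorem attach_of_ne {a b : V} (h : f a ≠ b) : attach G f a b = .inl a :=
  dif_neg fun h' => h h'.2

theorem attach_of_degree_ne_two {a b : V} (h : G.degree a ≠ 2) : attach G f a b = .inl a :=
  dif_neg fun h' => h h'.1

theorem attach_self {a : V} (h : G.degree a = 2) : attach G f a (f a) = .inr (⟨a, h⟩, 0) :=
  dif_pos ⟨h, rfl⟩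

theorem eq_of_attach_ne_inl {a b : V} (h : attach G f a b ≠ .inl a) : f a = b := by
  by_contra hab
  exact h (attach_of_ne hab)

theorem attach_ne_inr {a b : V} {u : {u : V // G.degree u = 2}} {i : Fin 3} (hi : i ≠ 0) :
    attach G f a b ≠ .inr (u, i) := by
  unfold attach; split <;> simp [Ne.symm hi]

theorem blowup_adj_of_mem_gadget {u : {u : V // G.degree u = 2}} {x y : Vtx G}
    (hx : x ∈ gadget G u) (hy : y ∈ gadget G u) (hxy : x ≠ y) : (blowup G f).Adj x y :=
  (fromEdgeSet_adj _).2 ⟨.inl ⟨u, x, hx, y, hy, hxy, rfl⟩, hxy⟩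

theorem blowup_adj_attach {a b : V} (h : G.Adj a b) :
    (blowup G f).Adj (attach G f a b) (attach G f b a) :=
  (fromEdgeSet_adj _).2 ⟨.inr ⟨a, b, h, rfl⟩, fun h' => h.ne (by simpa using congrArg (owner G) h')⟩

theorem blowup_adj_of_owner_ne {p q : Vtx G} (h : (blowup G f).Adj p q)
    (hne : owner G p ≠ owner G q) :
    G.Adj (owner G p) (owner G q) ∧ p = attach G f (owner G p) (owner G q) ∧
      q = attach G f (owner G q) (owner G p) := by
  rcases ((fromEdgeSet_adj _).1 h).1 with ⟨u, x, hx, y, hy, -, he⟩ | ⟨a, b, hab, he⟩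
  · rw [Sym2.eq_iff] at he
    rcases he with ⟨rfl, rfl⟩ | ⟨rfl, rfl⟩ <;>
      exact absurd ((owner_eq_of_mem_gadget ‹_›).trans (owner_eq_of_mem_gadget ‹_›).symm) hne
  · rw [Sym2.eq_iff] at he
    rcases he with ⟨rfl, rfl⟩ | ⟨rfl, rfl⟩
    · simpa using hab
    · simpa using hab.symm

theorem owner_eq_of_blowup_adj_inr {u : {u : V // G.degree u = 2}} {i : Fin 3} (hi : i ≠ 0)
    {q : Vtx G} (h : (blowup G f).Adj (.inr (u, i)) q) : owner G q = u := by
  by_contra hne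
  exact attach_ne_inr hi (blowup_adj_of_owner_ne h (Ne.symm hne)).2.1.symm

theorem eq_owner_of_blowup_adj {p q : Vtx G} (h : (blowup G f).Adj p q)
    (hne : owner G p ≠ owner G q) (hp : p ≠ .inl (owner G p)) : f (owner G p) = owner G q := by
  obtain ⟨-, hp', -⟩ := blowup_adj_of_owner_ne h hne
  rw [hp', owner_attach] at hp
  exact eq_of_attach_ne_inl hp

variable (G f)

def liftEdge : Sym2 V → Sym2 (Vtx G) :=
  Sym2.lift ⟨fun a b => s(attach G f a b, attach G f b a), fun _ _ => Sym2.eq_swap⟩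

/-- The spanning subgraph of `blowup G f` corresponding to `H ≤ G`: as a graph, `H` with
the edge `u – f u` subdivided three times at every degree-`2` vertex `u` of `G`. -/
def lift (H : SimpleGraph V) : SimpleGraph (Vtx G) :=
  fromEdgeSet (Set.range (gadgetPathEdge G) ∪ liftEdge G f '' H.edgeSet)

variable {G f}

theorem map_owner_liftEdge (e : Sym2 V) : Sym2.map (owner G) (liftEdge G f e) = e := by
  induction e using Sym2.ind with
  | _ a b => simp [liftEdge]

theorem ncard_edgeSet_lift (H : SimpleGraph V) :
    (lift G f H).edgeSet.ncard =
      H.edgeSet.ncard + 3 * (Finset.univ.filter fun u : V => G.degree u = 2).card := by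
  have hdisj : Disjoint (Set.range (gadgetPathEdge G)) (liftEdge G f '' H.edgeSet) := by
    rw [Set.disjoint_left]
    rintro _ ⟨z, rfl⟩ ⟨e, he, hze⟩
    have := congrArg (Sym2.map (owner G)) hze
    rw [map_owner_gadgetPathEdge, map_owner_liftEdge] at this
    exact H.not_isDiag_of_mem_edgeSet he (this ▸ Sym2.mk_isDiag_iff.2 rfl)
  have hloopless : Disjoint (Set.range (gadgetPathEdge G) ∪ liftEdge G f '' H.edgeSet)
      Sym2.diagSet := by
    rw [Set.disjoint_left]
    rintro _ (⟨z, rfl⟩ | ⟨e, he, rfl⟩) hdiag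
    · obtain ⟨u, i⟩ := z
      fin_cases i <;> simp [gadgetPathEdge] at hdiag
    · exact H.not_isDiag_of_mem_edgeSet he (map_owner_liftEdge (G := G) (f := f) e ▸ hdiag.map)
  rw [lift, edgeSet_fromEdgeSet, hloopless.sdiff_eq_left, Set.ncard_union_eq hdisj,
    Set.ncard_range_of_injective gadgetPathEdge_injective,
    Set.ncard_image_of_injective _ (Function.LeftInverse.injective map_owner_liftEdge),
    Nat.card_eq_fintype_card, Fintype.card_prod, Fintype.card_fin, Fintype.card_subtype]
  ring

section lift

variable {H : SimpleGraph V}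

theorem lift_adj_gadgetPathEdge {z : {u : V // G.degree u = 2} × Fin 3} {p q : Vtx G}
    (hz : gadgetPathEdge G z = s(p, q)) (hpq : p ≠ q) : (lift G f H).Adj p q :=
  (fromEdgeSet_adj _).2 ⟨.inl ⟨z, hz⟩, hpq⟩

theorem lift_adj_attach {a b : V} (h : H.Adj a b) :
    (lift G f H).Adj (attach G f a b) (attach G f b a) :=
  (fromEdgeSet_adj _).2 ⟨.inr ⟨s(a, b), h, rfl⟩,
    fun h' => h.ne (by simpa using congrArg (owner G) h')⟩

theorem lift_le_blowup (hHG : H ≤ G) : lift G f H ≤ blowup G f := by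
  refine fromEdgeSet_mono (Set.union_subset ?_ ?_)
  · rintro _ ⟨⟨u, i⟩, rfl⟩
    left
    fin_cases i
    · exact ⟨u, _, .inl rfl, _, .inr (.inr (.inl rfl)), by simp, rfl⟩
    · exact ⟨u, _, .inr (.inr (.inl rfl)), _, .inr (.inr (.inr rfl)), by simp, rfl⟩
    · exact ⟨u, _, .inr (.inr (.inr rfl)), _, .inr (.inl rfl), by simp, rfl⟩
  · rintro _ ⟨e, he, rfl⟩
    induction e using Sym2.ind with
    | _ a b => exact .inr ⟨a, b, hHG he, rfl⟩

theorem lift_reachable_inl_owner {x : Vtx G} (p : Vtx G) (hp : owner G p ≠ owner G x) :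
    ((lift G f H).deleteIncidenceSet x).Reachable p (.inl (owner G p)) := by
  have adj : ∀ {z : {u : V // G.degree u = 2} × Fin 3} {q r : Vtx G},
      gadgetPathEdge G z = s(q, r) → q ≠ r → owner G q ≠ owner G x → owner G r ≠ owner G x →
      ((lift G f H).deleteIncidenceSet x).Reachable q r := fun hz hqr hq hr =>
    (deleteIncidenceSet_adj.2 ⟨lift_adj_gadgetPathEdge hz hqr, ne_of_apply_ne _ hq,
      ne_of_apply_ne _ hr⟩).reachable
  rcases p with v | ⟨u, i⟩
  · rfl
  have h₁ : ((lift G f H).deleteIncidenceSet x).Reachable (.inr (u, 1)) (.inl u.1) :=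
    (adj (z := (u, 0)) Sym2.eq_swap (by simp) hp hp)
  have h₂ : ((lift G f H).deleteIncidenceSet x).Reachable (.inr (u, 2)) (.inr (u, 1)) :=
    (adj (z := (u, 1)) Sym2.eq_swap (by simp) hp hp)
  fin_cases i
  · exact (adj (z := (u, 2)) Sym2.eq_swap (by simp) hp hp).trans (h₂.trans h₁)
  · exact h₁
  · exact h₂.trans h₁

theorem lift_reachable_of_owner_ne (hH : TwoVertexConnected H) {x p q : Vtx G}
    (hp : owner G p ≠ owner G x) (hq : owner G q ≠ owner G x) :
    ((lift G f H).deleteIncidenceSet x).Reachable p q := by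
  have hinl : ((lift G f H).deleteIncidenceSet x).Reachable (.inl (owner G p)) (.inl (owner G q)) :=
    ((twoVertexConnected_iff.1 hH).2 _ _ _ hp hq).map_of_adj Sum.inl fun a b hab => by
      obtain ⟨hab, ha, hb⟩ := deleteIncidenceSet_adj.1 hab
      have hcross : ((lift G f H).deleteIncidenceSet x).Adj (attach G f a b) (attach G f b a) :=
        deleteIncidenceSet_adj.2 ⟨lift_adj_attach hab, ne_of_apply_ne (owner G) (by simpa),
          ne_of_apply_ne (owner G) (by simpa)⟩
      have ha' := lift_reachable_inl_owner (f := f) (H := H) (attach G f a b) (by simpa)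
      have hb' := lift_reachable_inl_owner (f := f) (H := H) (attach G f b a) (by simpa)
      rw [owner_attach] at ha' hb'
      exact ha'.symm.trans (hcross.reachable.trans hb')
  exact (lift_reachable_inl_owner p hp).trans (hinl.trans (lift_reachable_inl_owner q hq).symm)

/-- Both ends `inl u` and `(u, 0)` of the gadget path of `u` have a neighbour outside the
gadget, and any other gadget vertex reaches one of them without passing through `x`. -/
theorem lift_exists_reachable_owner_ne (hHG : H ≤ G) (hH : TwoVertexConnected H)
    (hf : ∀ u : V, G.degree u = 2 → G.Adj u (f u)) {x p : Vtx G} (hpx : p ≠ x) :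
    ∃ q, owner G q ≠ owner G x ∧ ((lift G f H).deleteIncidenceSet x).Reachable p q := by
  set L := (lift G f H).deleteIncidenceSet x
  by_cases hp : owner G p = owner G x
  swap
  · exact ⟨p, hp, .rfl⟩
  set c := owner G x
  have hc : G.degree c = 2 := by
    by_contra hc
    exact hpx ((eq_inl_of_degree_ne_two (hp ▸ hc)).trans (hp ▸ (eq_inl_of_degree_ne_two hc).symm))
  obtain ⟨w, hwf, hw⟩ := hH.exists_adj_ne (hf c hc).ne'
  have hcf := hH.adj_of_degree_eq_two hHG hc (hf c hc)
  have exit : ∀ {b : V}, H.Adj c b → attach G f c b ≠ x →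
      ∃ q, owner G q ≠ c ∧ L.Reachable (attach G f c b) q := fun hcb hx =>
    ⟨_, by simpa using hcb.ne', (deleteIncidenceSet_adj.2 ⟨lift_adj_attach hcb, hx,
      ne_of_apply_ne (owner G) (by simpa using hcb.ne')⟩).reachable⟩
  have exit_inl : Sum.inl c ≠ x → ∃ q, owner G q ≠ c ∧ L.Reachable (.inl c) q := by
    rw [← attach_of_ne (G := G) (Ne.symm hwf)]
    exact exit hw
  have exit_zero : Sum.inr (⟨c, hc⟩, 0) ≠ x →
      ∃ q, owner G q ≠ c ∧ L.Reachable (.inr (⟨c, hc⟩, 0)) q := by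
    rw [← attach_self hc]
    exact exit hcf
  have step : ∀ {z} {q r : Vtx G}, gadgetPathEdge G z = s(q, r) → q ≠ r → q ≠ x → r ≠ x →
      (∃ t, owner G t ≠ c ∧ L.Reachable r t) → ∃ t, owner G t ≠ c ∧ L.Reachable q t :=
    fun hz hqr hq hr ⟨t, ht, hrt⟩ => ⟨t, ht,
      (deleteIncidenceSet_adj.2 ⟨lift_adj_gadgetPathEdge hz hqr, hq, hr⟩).reachable.trans hrt⟩
  rcases p with v | ⟨u, i⟩
  · subst hp
    exact exit_inl hpx
  obtain rfl : u = ⟨c, hc⟩ := Subtype.ext hp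
  fin_cases i
  · exact exit_zero hpx
  · by_cases hx : Sum.inl c = x
    · refine step (z := (⟨c, hc⟩, 1)) rfl (by simp) hpx (by simp [← hx]) ?_
      exact step (z := (⟨c, hc⟩, 2)) rfl (by simp) (by simp [← hx]) (by simp [← hx])
        (exit_zero (by simp [← hx]))
    · exact step (z := (⟨c, hc⟩, 0)) Sym2.eq_swap (by simp) hpx hx (exit_inl hx)
  · by_cases hx : Sum.inr (⟨c, hc⟩, 0) = x
    · refine step (z := (⟨c, hc⟩, 1)) Sym2.eq_swap (by simp) hpx (by simp [← hx]) ?_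
      exact step (z := (⟨c, hc⟩, 0)) Sym2.eq_swap (by simp) (by simp [← hx]) (by simp [← hx])
        (exit_inl (by simp [← hx]))
    · exact step (z := (⟨c, hc⟩, 2)) rfl (by simp) hpx hx (exit_zero hx)

theorem lift_twoVertexConnected (hHG : H ≤ G) (hH : TwoVertexConnected H)
    (hf : ∀ u : V, G.degree u = 2 → G.Adj u (f u)) : TwoVertexConnected (lift G f H) := by
  refine twoVertexConnected_iff.2
    ⟨hH.1.trans (Nat.card_le_card_of_injective _ Sum.inl_injective), fun x a b ha hb => ?_⟩
  obtain ⟨a', ha', haa'⟩ := lift_exists_reachable_owner_ne hHG hH hf ha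
  obtain ⟨b', hb', hbb'⟩ := lift_exists_reachable_owner_ne hHG hH hf hb
  exact haa'.trans ((lift_reachable_of_owner_ne hH ha' hb').trans hbb'.symm)

end lift

section contract

variable {H' : SimpleGraph (Vtx G)}

theorem contract_owner_le (hH' : H' ≤ blowup G f) : H'.contract (owner G) ≤ G :=
  contract_le fun _ _ h hne => (blowup_adj_of_owner_ne (hH' h) hne).1

theorem contract_owner_twoVertexConnected (hH' : H' ≤ blowup G f) (hG : 3 ≤ Nat.card V)
    (h2 : TwoVertexConnected H') : TwoVertexConnected (H'.contract (owner G)) := by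
  rw [twoVertexConnected_iff] at h2 ⊢
  refine ⟨hG, fun a b c hb hc => ?_⟩
  -- In `H' - inl a` the rest of the gadget of `a` hangs off the edge `(a, 0) – attach (f a) a`,
  -- so it can be collapsed onto `f a`.
  let π : Vtx G → V := fun p => if owner G p = a then f a else owner G p
  have hπ : ∀ p q, (H'.deleteIncidenceSet (.inl a)).Adj p q →
      ((H'.contract (owner G)).deleteIncidenceSet a).Reachable (π p) (π q) := by
    intro p q hpq
    obtain ⟨hpq, hp, hq⟩ := deleteIncidenceSet_adj.1 hpq
    by_cases hpq' : owner G p = owner G q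
    · simp [π, hpq']
    by_cases hpa : owner G p = a
    · have := eq_owner_of_blowup_adj (hH' hpq) hpq' (hpa ▸ hp)
      simp [π, hpa, ← this]
    by_cases hqa : owner G q = a
    · have := eq_owner_of_blowup_adj (hH' hpq.symm) (Ne.symm hpq') (hqa ▸ hq)
      simp [π, hqa, ← this]
    simpa [π, hpa, hqa] using
      (deleteIncidenceSet_adj.2 ⟨contract_adj_of_adj hpq hpq', hpa, hqa⟩).reachable
  simpa [π, hb, hc] using
    (h2.2 (.inl a) (.inl b) (.inl c) (by simpa) (by simpa)).map_of_adj π hπ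

theorem exists_three_edges_in_gadget (hH' : H' ≤ blowup G f) (h2 : TwoVertexConnected H')
    (u : {u : V // G.degree u = 2}) :
    ∃ g : Fin 3 → Sym2 (Vtx G), Function.Injective g ∧
      ∀ i, g i ∈ H'.edgeSet ∧ Sym2.map (owner G) (g i) = s(u.1, u.1) := by
  obtain ⟨y, hy2, hy⟩ := h2.exists_adj_ne (v := .inr (u, 1)) (y := .inr (u, 2)) (by simp)
  obtain ⟨t, hty, ht⟩ := h2.exists_adj_ne hy.ne'
  obtain ⟨z, hz1, hz⟩ := h2.exists_adj_ne (v := .inr (u, 2)) (y := .inr (u, 1)) (by simp)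
  have hy' := owner_eq_of_blowup_adj_inr (by decide) (hH' hy)
  have ht' := owner_eq_of_blowup_adj_inr (by decide) (hH' ht)
  have hz' := owner_eq_of_blowup_adj_inr (by decide) (hH' hz)
  refine ⟨![s(.inr (u, 1), y), s(.inr (u, 1), t), s(.inr (u, 2), z)], ?_, ?_⟩
  · intro i j hij
    fin_cases i <;> fin_cases j <;> simp_all [hy.ne, ht.ne]
  · intro i
    fin_cases i <;> simp [hy, ht, hz, hy', ht', hz']

theorem three_mul_le_ncard_internal (hH' : H' ≤ blowup G f) (h2 : TwoVertexConnected H') :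
    3 * (Finset.univ.filter fun u : V => G.degree u = 2).card ≤
      (H'.edgeSet ∩ {e | (Sym2.map (owner G) e).IsDiag}).ncard := by
  choose g hg_inj hg using exists_three_edges_in_gadget hH' h2
  let F : {u : V // G.degree u = 2} × Fin 3 → ↥(H'.edgeSet ∩ {e | (Sym2.map (owner G) e).IsDiag}) :=
    fun z => ⟨g z.1 z.2, (hg _ _).1, by simp [(hg _ _).2]⟩
  have hF : Function.Injective F := by
    rintro ⟨u, i⟩ ⟨u', i'⟩ h
    have hu : u = u' := by
      have := congrArg (Sym2.map (owner G) ∘ Subtype.val) h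
      simpa [F, (hg _ _).2, Subtype.ext_iff] using this
    subst hu
    exact Prod.ext rfl (hg_inj u (congrArg Subtype.val h))
  have := Nat.card_le_card_of_injective F hF
  rwa [Nat.card_coe_set_eq, Nat.card_eq_fintype_card, Fintype.card_prod, Fintype.card_fin,
    Fintype.card_subtype, mul_comm] at this

theorem ncard_edgeSet_contract_add_le (hH' : H' ≤ blowup G f) (h2 : TwoVertexConnected H') :
    (H'.contract (owner G)).edgeSet.ncard +
      3 * (Finset.univ.filter fun u : V => G.degree u = 2).card ≤ H'.edgeSet.ncard :=
  calc _ ≤ (H'.edgeSet \ {e | (Sym2.map (owner G) e).IsDiag}).ncard +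
        (H'.edgeSet ∩ {e | (Sym2.map (owner G) e).IsDiag}).ncard :=
        add_le_add ncard_edgeSet_contract_le (three_mul_le_ncard_internal hH' h2)
    _ = H'.edgeSet.ncard := by rw [add_comm, Set.ncard_inter_add_ncard_sdiff_eq_ncard]

end contract

theorem blowup_twoVertexConnected (hG : TwoVertexConnected G)
    (hf : ∀ u : V, G.degree u = 2 → G.Adj u (f u)) : TwoVertexConnected (blowup G f) :=
  (lift_twoVertexConnected le_rfl hG hf).mono (lift_le_blowup le_rfl)

theorem three_le_ncard_neighborSet_blowup (hG : TwoVertexConnected G) (x : Vtx G) :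
    3 ≤ ((blowup G f).neighborSet x).ncard := by
  by_cases hx : G.degree (owner G x) = 2
  · have hmem := mem_gadget_owner hx
    calc 3 = (gadget G ⟨owner G x, hx⟩ \ {x}).ncard := by
          rw [Set.ncard_sdiff_singleton_of_mem hmem, ncard_gadget]
      _ ≤ _ := Set.ncard_le_ncard (fun y hy => blowup_adj_of_mem_gadget hmem hy.1 (Ne.symm hy.2))
  · rw [eq_inl_of_degree_ne_two hx]
    calc 3 ≤ G.degree (owner G x) := lt_of_le_of_ne (hG.two_le_degree _) (Ne.symm hx)
      _ = (G.neighborSet (owner G x)).ncard := by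
          rw [← card_neighborFinset_eq_degree, ← Set.ncard_coe_finset, coe_neighborFinset]
      _ ≤ _ := Set.ncard_le_ncard_of_injOn (fun t => attach G f t (owner G x))
          (fun t ht => by simpa [attach_of_degree_ne_two hx] using (blowup_adj_attach (f := f) ht))
          (fun s _ t _ hst => by simpa using congrArg (owner G) hst)

theorem OPT2VC_blowup (hG : TwoVertexConnected G)
    (hf : ∀ u : V, G.degree u = 2 → G.Adj u (f u)) :
    OPT2VC (blowup G f) =
      OPT2VC G + 3 * (Finset.univ.filter fun u : V => G.degree u = 2).card :=
  OPT2VC_eq_add hG _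
    (fun H hHG hH => ⟨lift G f H, lift_le_blowup hHG, lift_twoVertexConnected hHG hH hf,
      (ncard_edgeSet_lift H).le⟩)
    (fun H' hH' h2 => ⟨H'.contract (owner G), contract_owner_le hH',
      contract_owner_twoVertexConnected hH' hG.1 h2, ncard_edgeSet_contract_add_le hH' h2⟩)

end DegreeTwoBlowup

/-- Appendix A1. Replacing every degree-`2` vertex `u` of a
2-vertex-connected graph `G` by a copy of `K₄` (the two edges formerly incident to `u`
being attached to two distinct vertices of that copy, as prescribed by a choice function
`f` selecting one of the two neighbours of each degree-`2` vertex) yields a simple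
2-vertex-connected graph `G'` of minimum degree at least `3` with
`OPT_2VC(G') = OPT_2VC(G) + 3·n(G)`, where `n(G)` is the number of degree-`2` vertices. -/
theorem statement_13 {V : Type*} [Fintype V] [DecidableEq V] (G : SimpleGraph V)
    [DecidableRel G.Adj]
    (hG : TwoVertexConnected G)
    (f : V → V) (hf : ∀ u : V, G.degree u = 2 → G.Adj u (f u)) :
    let D2 := {u : V // G.degree u = 2}
    let attach : V → V → V ⊕ (D2 × Fin 3) := fun a b =>
      if h : G.degree a = 2 ∧ f a = b then Sum.inr (⟨a, h.1⟩, (0 : Fin 3)) else Sum.inl a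
    let gadget : D2 → Set (V ⊕ (D2 × Fin 3)) := fun u =>
      {Sum.inl u.1, Sum.inr (u, 0), Sum.inr (u, 1), Sum.inr (u, 2)}
    let G' : SimpleGraph (V ⊕ (D2 × Fin 3)) := SimpleGraph.fromEdgeSet
      ({e | ∃ u : D2, ∃ x ∈ gadget u, ∃ y ∈ gadget u, x ≠ y ∧ e = s(x, y)} ∪
       {e | ∃ a b : V, G.Adj a b ∧ e = s(attach a b, attach b a)})
    TwoVertexConnected G' ∧ (∀ x, 3 ≤ (G'.neighborSet x).ncard) ∧
      OPT2VC G' = OPT2VC G + 3 * (Finset.univ.filter fun u : V => G.degree u = 2).card :=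
  ⟨DegreeTwoBlowup.blowup_twoVertexConnected hG hf,
    DegreeTwoBlowup.three_le_ncard_neighborSet_blowup hG,
    DegreeTwoBlowup.OPT2VC_blowup hG hf⟩
end
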